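/- arXiv:2105.14752 — 5 statements merged into one kernel-verified Lean document; each statement's English description precedes it below -/
import Mathlib

section
/- Let (Y(1),Y(0),S,X) be a single unit's variables, fix τ, τ′ ∈ (0,1) with f_a(q_a(τ)) > 0 and f_a(q_a(τ′)) > 0 for a = 0,1, and let m̄_a(τ,·,·), m̄_a(τ′,·,·) be working models with E[m̄_a(·,S,X)² | S = s] < ∞ for every s ∈ 𝒮 and both quantile indices. Define δ_a(τ,s,x) = m_a(τ,s,x) − m_a(τ,s), δ̄_a(τ,s,x) = m̄_a(τ,s,x) − m̄_a(τ,s), and u(τ) = √((1−π(S))/π(S)) · (δ₁(τ,S,X) − δ̄₁(τ,S,X))/f₁(q₁(τ)) + √(π(S)/(1−π(S))) · (δ₀(τ,S,X) − δ̄₀(τ,S,X))/f₀(q₀(τ)). Let Σ(τ,τ′) = E[π(S)φ₁(τ,S,Y(1),X)φ₁(τ′,S,Y(1),X)] + E[(1−π(S))φ₀(τ,S,Y(0),X)φ₀(τ′,S,Y(0),X)] + E[φ_S(τ,S)φ_S(τ′,S)], and let Σ*(τ,τ′) = E[(1/π(S)) (τ − 1{Y(1)≤q₁(τ)} − m₁(τ,S,X))(τ′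 − 1{Y(1)≤q₁(τ′)} − m₁(τ′,S,X))/(f₁(q₁(τ)) f₁(q₁(τ′)))] + E[(1/(1−π(S))) (τ − 1{Y(0)≤q₀(τ)} − m₀(τ,S,X))(τ′ − 1{Y(0)≤q₀(τ′)} − m₀(τ′,S,X))/(f₀(q₀(τ)) f₀(q₀(τ′)))] + E[(m₁(τ,S,X)/f₁(q₁(τ)) − m₀(τ,S,X)/f₀(q₀(τ)))(m₁(τ′,S,X)/f₁(q₁(τ′)) − m₀(τ′,S,X)/f₀(q₀(τ′)))]. Then Σ(τ,τ′) − Σ*(τ,τ′) = E[u(τ) u(τ′)]. Consequently, for any finite set of quantile indices τ₁,…,τ_K, the K×K matrix [Σ(τ_k,τ_l)]_{k,l} − [Σ*(τ_k,τ_l)]_{k,l} is positive semidefinite, and it equals the zero matrix whenever the working models are correctly specified at τ₁,…,τ_K, i.e. m̄_a(τ_k,S,X) = m_a(τ_k,S,X) almost surely for a = 0,1 and all k. -/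
/-!
Write each arm's influence function as `φ = B + (F - 1{Y ≤ q}) / (p f)`, where `B` is `φ` with
the indicator replaced by the conditional CDF `F` given `(S, X)`. Since `F` is that conditional
CDF, the residual `F - 1{Y ≤ q}` is orthogonal to every square-integrable function of `(S, X)`,
so `E[p φ φ'] = E[(F - 1{Y ≤ q}) (F' - 1{Y ≤ q'}) / (p f f')] + E[p B B']`, and the first term
is the matching part of `Σ*`. Likewise the stratum part of `Σ*` exceeds that of `Σ` by
`E[D D']`, where `D = δ₁ / f₁ - δ₀ / f₀` has zero mean given `S`. The remainder
`E[π B₁ B₁' + (1 - π) B₀ B₀' - D D']` equals `E[u u']` by a pointwise identity. Hence the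
matrix is the Gram matrix of the `u(τ_k)` in `L²`, and it vanishes when the working models are
correct, since then `u = 0` almost surely.
-/

noncomputable section
open scoped Classical
open MeasureTheory

/-- `P(S = s)` as a real number. -/
def probS {Ω 𝒮 : Type*} [MeasurableSpace Ω] (μ : Measure Ω) (S : Ω → 𝒮) (s : 𝒮) : ℝ :=
  (μ {ω | S ω = s}).toReal

/-- Conditional mean `E[h | S = s]`. -/
def condMeanS {Ω 𝒮 : Type*} [MeasurableSpace Ω] (μ : Measure Ω) (S : Ω → 𝒮)
    (h : Ω → ℝ) (s : 𝒮) : ℝ :=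
  (∫ ω in {ω | S ω = s}, h ω ∂μ) / probS μ S s

def condCDFS {Ω 𝒮 : Type*} [MeasurableSpace Ω] (μ : Measure Ω) (S : Ω → 𝒮) (Y : Ω → ℝ)
    (q : ℝ) (s : 𝒮) : ℝ :=
  condMeanS μ S (fun ω => if Y ω ≤ q then (1 : ℝ) else 0) s

/-- `m̄(τ, s)` for the working model `m = m̄(τ, ·, ·)`. -/
def modelMeanS {Ω 𝒮 𝒳 : Type*} [MeasurableSpace Ω] (μ : Measure Ω) (S : Ω → 𝒮) (X : Ω → 𝒳)
    (m : 𝒮 → 𝒳 → ℝ) (s : 𝒮) : ℝ :=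
  condMeanS μ S (fun ω => m s (X ω)) s

section Strata

variable {Ω 𝒮 : Type*} [MeasurableSpace Ω] {μ : Measure Ω} {S : Ω → 𝒮}

theorem setIntegral_fiber_eq_condMeanS_mul [IsFiniteMeasure μ] {s : 𝒮}
    (hp : 0 < μ {ω | S ω = s}) (g : Ω → ℝ) :
    ∫ ω in {ω | S ω = s}, g ω ∂μ = condMeanS μ S g s * probS μ S s :=
  (div_mul_cancel₀ _ (ENNReal.toReal_pos hp.ne' (measure_ne_top _ _)).ne').symm

variable [MeasurableSpace 𝒮] [MeasurableSingletonClass 𝒮]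

theorem integral_eq_sum_setIntegral_fiber [Fintype 𝒮] (hS : Measurable S) {f : Ω → ℝ}
    (hf : Integrable f μ) : ∫ ω, f ω ∂μ = ∑ s, ∫ ω in {ω | S ω = s}, f ω ∂μ := by
  rw [← integral_iUnion_fintype (s := fun s => {ω | S ω = s})
      (fun s => hS (measurableSet_singleton s))
      (fun s t hst => Set.disjoint_left.2 fun ω hs ht => hst (hs.symm.trans ht))
      fun _ => hf.integrableOn,
    Set.iUnion_eq_univ_iff.2 fun ω => ⟨S ω, rfl⟩, setIntegral_univ]

variable [IsFiniteMeasure μ]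

theorem memLp_comp_of_finite [Finite 𝒮] (hS : Measurable S) (c : 𝒮 → ℝ) (p : ENNReal) :
    MemLp (fun ω => c (S ω)) p μ := by
  obtain ⟨C, hC⟩ := (Set.finite_range fun s => ‖c s‖).bddAbove
  exact .of_bound ((measurable_of_finite c).comp hS).aestronglyMeasurable C
    (ae_of_all _ fun ω => hC ⟨S ω, rfl⟩)

theorem MeasureTheory.MemLp.mul_of_finite_left [Finite 𝒮] (hS : Measurable S) (c : 𝒮 → ℝ)
    {g : Ω → ℝ} {p : ENNReal} (hg : MemLp g p μ) : MemLp (fun ω => c (S ω) * g ω) p μ :=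
  hg.mul' (memLp_comp_of_finite hS c ⊤)

theorem MeasureTheory.MemLp.div_of_finite_right [Finite 𝒮] (hS : Measurable S) (c : 𝒮 → ℝ)
    {g : Ω → ℝ} {p : ENNReal} (hg : MemLp g p μ) : MemLp (fun ω => g ω / c (S ω)) p μ := by
  simpa only [div_eq_inv_mul] using hg.mul_of_finite_left hS fun s => (c s)⁻¹

theorem integral_condMeanS_sub_mul_eq_zero [Fintype 𝒮] (hS : Measurable S)
    (hp : ∀ s, 0 < μ {ω | S ω = s}) {g : Ω → ℝ} (hg : Integrable g μ) (c : 𝒮 → ℝ) :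
    ∫ ω, (condMeanS μ S g (S ω) - g ω) * c (S ω) ∂μ = 0 := by
  have hint : Integrable (fun ω => (condMeanS μ S g (S ω) - g ω) * c (S ω)) μ :=
    ((memLp_comp_of_finite hS _ 1).integrable le_rfl |>.sub hg).mul_of_top_left
      (memLp_comp_of_finite hS c ⊤)
  rw [integral_eq_sum_setIntegral_fiber hS hint]
  refine Finset.sum_eq_zero fun s _ => ?_
  have hs : MeasurableSet {ω | S ω = s} := hS (measurableSet_singleton s)
  rw [setIntegral_congr_fun hs (g := fun ω => (condMeanS μ S g s - g ω) * c s)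
      fun ω (hω : S ω = s) => by rw [hω],
    integral_mul_const, integral_sub (integrable_const _) hg.integrableOn, setIntegral_const,
    setIntegral_fiber_eq_condMeanS_mul (hp s), smul_eq_mul, probS, measureReal_def]
  ring

theorem memLp_indicator_le {Y : Ω → ℝ} (hY : Measurable Y) (t : ℝ) (p : ENNReal) :
    MemLp (fun ω => if Y ω ≤ t then (1 : ℝ) else 0) p μ :=
  .of_bound (Measurable.ite (measurableSet_le hY measurable_const) measurable_const
    measurable_const).aestronglyMeasurable 1 (ae_of_all _ fun _ => by split_ifs <;> simp)

end Strata

theorem measurable_comp_pair {Ω 𝒮 𝒳 : Type*} [MeasurableSpace Ω] [MeasurableSpace 𝒮]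
    [MeasurableSingletonClass 𝒮] [Countable 𝒮] [MeasurableSpace 𝒳] {S : Ω → 𝒮} {X : Ω → 𝒳}
    (hS : Measurable S) (hX : Measurable X) {h : 𝒮 → 𝒳 → ℝ} (hh : ∀ s, Measurable (h s)) :
    Measurable fun ω => h (S ω) (X ω) :=
  (measurable_from_prod_countable_left (f := fun q : 𝒳 × 𝒮 => h q.2 q.1) hh).comp
    (hX.prodMk hS)

theorem posSemidef_of_integral_mul {Ω ι : Type*} [MeasurableSpace Ω] {μ : Measure Ω} [Finite ι]
    {u : ι → Ω → ℝ} (hu : ∀ i, MemLp (u i) 2 μ) :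
    (Matrix.of fun i j => ∫ ω, u i ω * u j ω ∂μ).PosSemidef := by
  have hgram : (Matrix.of fun i j => ∫ ω, u i ω * u j ω ∂μ) =
      Matrix.gram ℝ fun i => (hu i).toLp (u i) := by
    ext i j
    rw [Matrix.gram_apply, Matrix.of_apply, L2.inner_def]
    refine integral_congr_ae ?_
    filter_upwards [(hu i).coeFn_toLp, (hu j).coeFn_toLp] with ω hi hj
    simp [hi, hj, mul_comm]
  exact hgram ▸ Matrix.posSemidef_gram ℝ _

/-- `F x s t` is a version of `P(Y ≤ t | S = s, X = x)`. -/
structure IsCondCDF {Ω 𝒮 𝒳 : Type*} [MeasurableSpace Ω] [MeasurableSpace 𝒳] (μ : Measure Ω)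
    (Y : Ω → ℝ) (S : Ω → 𝒮) (X : Ω → 𝒳) (F : 𝒳 → 𝒮 → ℝ → ℝ) : Prop where
  measurable : ∀ s t, Measurable fun x => F x s t
  mem_Icc : ∀ x s t, F x s t ∈ Set.Icc (0 : ℝ) 1
  measure_inter : ∀ s t B, MeasurableSet B →
    (μ ({ω | Y ω ≤ t} ∩ {ω | S ω = s} ∩ X ⁻¹' B)).toReal =
      ∫ ω in {ω | S ω = s} ∩ X ⁻¹' B, F (X ω) s t ∂μ

namespace IsCondCDF

variable {Ω 𝒮 𝒳 : Type*} [MeasurableSpace Ω] [MeasurableSpace 𝒳] {μ : Measure Ω}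
  {Y : Ω → ℝ} {S : Ω → 𝒮} {X : Ω → 𝒳} {F : 𝒳 → 𝒮 → ℝ → ℝ}

theorem abs_le_one (hF : IsCondCDF μ Y S X F) (x : 𝒳) (s : 𝒮) (t : ℝ) : |F x s t| ≤ 1 :=
  abs_le.2 ⟨by linarith [(hF.mem_Icc x s t).1], (hF.mem_Icc x s t).2⟩

theorem memLp_fiber (hF : IsCondCDF μ Y S X F) (hX : Measurable X) (s : 𝒮) (t : ℝ)
    (p : ENNReal) (ν : Measure Ω) [IsFiniteMeasure ν] : MemLp (fun ω => F (X ω) s t) p ν :=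
  .of_bound ((hF.measurable s t).comp hX).aestronglyMeasurable 1
    (ae_of_all _ fun _ => hF.abs_le_one _ _ _)

variable [IsFiniteMeasure μ]

theorem map_restrict_eq_withDensity (hF : IsCondCDF μ Y S X F) (hX : Measurable X) (s : 𝒮)
    (t : ℝ) :
    (μ.restrict ({ω | Y ω ≤ t} ∩ {ω | S ω = s})).map X =
      ((μ.restrict {ω | S ω = s}).map X).withDensity fun x => ENNReal.ofReal (F x s t) := by
  ext B hB
  rw [Measure.map_apply hX hB, Measure.restrict_apply (hX hB), withDensity_apply _ hB,
    setLIntegral_map hB (hF.measurable s t).ennreal_ofReal hX,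
    Measure.restrict_restrict (hX hB), Set.inter_comm, Set.inter_comm (X ⁻¹' B),
    ← ofReal_integral_eq_lintegral_ofReal ((hF.memLp_fiber hX s t 1 _).integrable le_rfl)
      (ae_of_all _ fun _ => (hF.mem_Icc _ s t).1),
    ← hF.measure_inter s t B hB, ENNReal.ofReal_toReal (measure_ne_top _ _)]

theorem setIntegral_indicator_mul (hF : IsCondCDF μ Y S X F) (hY : Measurable Y)
    (hX : Measurable X) (s : 𝒮) (t : ℝ) {g : 𝒳 → ℝ} (hg : Measurable g) :
    ∫ ω in {ω | S ω = s}, (if Y ω ≤ t then (1 : ℝ) else 0) * g (X ω) ∂μ =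
      ∫ ω in {ω | S ω = s}, F (X ω) s t * g (X ω) ∂μ := by
  have hYt : MeasurableSet {ω | Y ω ≤ t} := measurableSet_le hY measurable_const
  calc ∫ ω in {ω | S ω = s}, (if Y ω ≤ t then (1 : ℝ) else 0) * g (X ω) ∂μ
      = ∫ x, g x ∂(μ.restrict ({ω | Y ω ≤ t} ∩ {ω | S ω = s})).map X := by
        rw [integral_map hX.aemeasurable hg.aestronglyMeasurable,
          ← Measure.restrict_restrict hYt, ← integral_indicator hYt]
        congr 1 with ω
        simp [Set.indicator_apply]
    _ = ∫ ω in {ω | S ω = s}, F (X ω) s t * g (X ω) ∂μ := by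
        rw [hF.map_restrict_eq_withDensity hX, integral_withDensity_eq_integral_toReal_smul
            (hF.measurable s t).ennreal_ofReal (ae_of_all _ fun _ => ENNReal.ofReal_lt_top),
          integral_map (f := fun x => (ENNReal.ofReal (F x s t)).toReal • g x) hX.aemeasurable
            ((hF.measurable s t).ennreal_ofReal.ennreal_toReal.smul hg).aestronglyMeasurable]
        simp only [ENNReal.toReal_ofReal (hF.mem_Icc _ s t).1, smul_eq_mul]

variable [MeasurableSpace 𝒮] [MeasurableSingletonClass 𝒮]

theorem memLp [Countable 𝒮] (hF : IsCondCDF μ Y S X F) (hS : Measurable S) (hX : Measurable X)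
    (t : ℝ) (p : ENNReal) : MemLp (fun ω => F (X ω) (S ω) t) p μ :=
  .of_bound (measurable_comp_pair hS hX fun s => hF.measurable s t).aestronglyMeasurable 1
    (ae_of_all _ fun _ => hF.abs_le_one _ _ _)

theorem integral_sub_indicator_mul_eq_zero [Fintype 𝒮] (hF : IsCondCDF μ Y S X F)
    (hY : Measurable Y) (hS : Measurable S) (hX : Measurable X) (t : ℝ) {h : 𝒮 → 𝒳 → ℝ}
    (hh : ∀ s, Measurable (h s)) (hhi : Integrable (fun ω => h (S ω) (X ω)) μ) :
    ∫ ω, (F (X ω) (S ω) t - (if Y ω ≤ t then (1 : ℝ) else 0)) * h (S ω) (X ω) ∂μ = 0 := by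
  have hint : Integrable
      (fun ω => (F (X ω) (S ω) t - (if Y ω ≤ t then (1 : ℝ) else 0)) * h (S ω) (X ω)) μ :=
    hhi.mul_of_top_right ((hF.memLp hS hX t ⊤).sub (memLp_indicator_le hY t ⊤))
  rw [integral_eq_sum_setIntegral_fiber hS hint]
  refine Finset.sum_eq_zero fun s _ => ?_
  have hs : MeasurableSet {ω | S ω = s} := hS (measurableSet_singleton s)
  have hhs : Integrable (fun ω => h s (X ω)) (μ.restrict {ω | S ω = s}) :=
    (integrableOn_congr_fun (fun ω (hω : S ω = s) => by rw [hω]) hs).1 hhi.integrableOn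
  have hFh : Integrable (fun ω => F (X ω) s t * h s (X ω)) (μ.restrict {ω | S ω = s}) :=
    hhs.mul_of_top_right (hF.memLp_fiber hX s t ⊤ _)
  have hIh : Integrable (fun ω => (if Y ω ≤ t then (1 : ℝ) else 0) * h s (X ω))
      (μ.restrict {ω | S ω = s}) :=
    hhs.mul_of_top_right (memLp_indicator_le hY t ⊤)
  rw [setIntegral_congr_fun hs (g := fun ω => F (X ω) s t * h s (X ω) -
      (if Y ω ≤ t then (1 : ℝ) else 0) * h s (X ω)) fun ω (hω : S ω = s) => by rw [hω]; ring,
    integral_sub hFh hIh, hF.setIntegral_indicator_mul hY hX s t (hh s), sub_self]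

theorem integral_condCDFS_sub_mul_eq_zero [Fintype 𝒮] (hF : IsCondCDF μ Y S X F)
    (hY : Measurable Y) (hS : Measurable S) (hX : Measurable X)
    (hp : ∀ s, 0 < μ {ω | S ω = s}) (t : ℝ) (c : 𝒮 → ℝ) :
    ∫ ω, (condCDFS μ S Y t (S ω) - F (X ω) (S ω) t) * c (S ω) ∂μ = 0 := by
  set I : Ω → ℝ := fun ω => if Y ω ≤ t then (1 : ℝ) else 0
  have hI : MemLp I 1 μ := memLp_indicator_le hY t 1
  have hc : MemLp (fun ω => c (S ω)) ⊤ μ := memLp_comp_of_finite hS c ⊤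
  have hGI : Integrable (fun ω => (condMeanS μ S I (S ω) - I ω) * c (S ω)) μ :=
    ((memLp_comp_of_finite hS _ 1).sub hI).integrable_mul hc
  have hFI : Integrable (fun ω => (F (X ω) (S ω) t - I ω) * c (S ω)) μ :=
    ((hF.memLp hS hX t 1).sub hI).integrable_mul hc
  calc ∫ ω, (condCDFS μ S Y t (S ω) - F (X ω) (S ω) t) * c (S ω) ∂μ
      = ∫ ω, (condMeanS μ S I (S ω) - I ω) * c (S ω) ∂μ -
          ∫ ω, (F (X ω) (S ω) t - I ω) * c (S ω) ∂μ := by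
        rw [← integral_sub hGI hFI]
        congr 1 with ω
        rw [condCDFS]
        ring
    _ = 0 := by
        rw [_root_.integral_condMeanS_sub_mul_eq_zero hS hp (hI.integrable le_rfl),
          hF.integral_sub_indicator_mul_eq_zero hY hS hX t (h := fun s _ => c s)
            (fun _ => measurable_const) (hc.integrable le_top), sub_zero]

theorem modelMeanS_eq_of_ae_eq (hF : IsCondCDF μ Y S X F) (hY : Measurable Y)
    (hS : Measurable S) (hX : Measurable X) {s : 𝒮} (hp : 0 < μ {ω | S ω = s})
    {m : 𝒮 → 𝒳 → ℝ} {τ t : ℝ} (hm : ∀ᵐ ω ∂μ, m (S ω) (X ω) = τ - F (X ω) (S ω) t) :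
    modelMeanS μ S X m s = τ - condCDFS μ S Y t s := by
  have hs : MeasurableSet {ω | S ω = s} := hS (measurableSet_singleton s)
  have hIF := hF.setIntegral_indicator_mul hY hX s t (g := fun _ => 1) measurable_const
  simp only [mul_one] at hIF
  have hP : probS μ S s ≠ 0 := (ENNReal.toReal_pos hp.ne' (measure_ne_top _ _)).ne'
  rw [modelMeanS, condCDFS, condMeanS, condMeanS,
    setIntegral_congr_ae hs (g := fun ω => τ - F (X ω) s t)
      (hm.mono fun ω hω (hωs : S ω = s) => hωs ▸ hω),
    integral_sub (integrable_const τ) ((hF.memLp_fiber hX s t 1 _).integrable le_rfl), ← hIF,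
    setIntegral_const, smul_eq_mul, sub_div, measureReal_def, ← probS,
    mul_div_cancel_left₀ _ hP]

end IsCondCDF

section Decomposition

variable {Ω 𝒮 𝒳 : Type*} [MeasurableSpace Ω] {μ : Measure Ω}

theorem integral_add_mul_add_of_integral_mul_eq_zero {a r a' r' : Ω → ℝ} (ha : MemLp a 2 μ)
    (hr : MemLp r 2 μ) (ha' : MemLp a' 2 μ) (hr' : MemLp r' 2 μ)
    (h₁ : ∫ ω, a ω * r' ω ∂μ = 0) (h₂ : ∫ ω, r ω * a' ω ∂μ = 0) :
    ∫ ω, (a ω + r ω) * (a' ω + r' ω) ∂μ = ∫ ω, a ω * a' ω ∂μ + ∫ ω, r ω * r' ω ∂μ := by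
  have i₁ : Integrable (fun ω => a ω * a' ω) μ := ha.integrable_mul ha'
  have i₂ : Integrable (fun ω => a ω * r' ω) μ := ha.integrable_mul hr'
  have i₃ : Integrable (fun ω => r ω * a' ω) μ := hr.integrable_mul ha'
  have i₄ : Integrable (fun ω => r ω * r' ω) μ := hr.integrable_mul hr'
  calc ∫ ω, (a ω + r ω) * (a' ω + r' ω) ∂μ
      = ∫ ω, (a ω * a' ω + r ω * r' ω) + (a ω * r' ω + r ω * a' ω) ∂μ := by
        congr 1 with ω
        ring
    _ = ∫ ω, a ω * a' ω ∂μ + ∫ ω, r ω * r' ω ∂μ := by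
        rw [integral_add (f := fun ω => a ω * a' ω + r ω * r' ω)
            (g := fun ω => a ω * r' ω + r ω * a' ω) (i₁.add i₄) (i₂.add i₃),
          integral_add i₁ i₄, integral_add i₂ i₃, h₁, h₂, add_zero, add_zero]

variable (μ) in
/-- One arm's influence function with the outcome indicator `1{y ≤ q}` replaced by a variable
`z`: `φ₁(τ, s, y, x) = armInfluence μ S X Y(1) π (1 - π) τ q₁ f₁ f₀ m̄₁ m̄₀ s 1{y ≤ q₁} x`, and
`φ₀` is the same with the arms exchanged. At `z = F x s q` it is the projection of `φ` on
`(S, X)`. -/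
def armInfluence (S : Ω → 𝒮) (X : Ω → 𝒳) (Y : Ω → ℝ) (p p' : 𝒮 → ℝ) (τ q f g : ℝ)
    (m n : 𝒮 → 𝒳 → ℝ) (s : 𝒮) (z : ℝ) (x : 𝒳) : ℝ :=
  ((τ - z - (τ - condCDFS μ S Y q s)) - p' s * (m s x - modelMeanS μ S X m s)) / (p s * f) -
    (n s x - modelMeanS μ S X n s) / g

variable (μ) in
/-- `δ - δ̄` for one arm: the centred error of the working model `m` against the true
`m(τ, s, x) = τ - F x s q`. -/
def armDeviation (S : Ω → 𝒮) (X : Ω → 𝒳) (Y : Ω → ℝ) (F : 𝒳 → 𝒮 → ℝ → ℝ) (τ q : ℝ)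
    (m : 𝒮 → 𝒳 → ℝ) (ω : Ω) : ℝ :=
  ((τ - F (X ω) (S ω) q) - (τ - condCDFS μ S Y q (S ω))) -
    (m (S ω) (X ω) - modelMeanS μ S X m (S ω))

variable {S : Ω → 𝒮} {X : Ω → 𝒳} {Y : Ω → ℝ} {p p' : 𝒮 → ℝ} {τ q f g : ℝ}
  {m n : 𝒮 → 𝒳 → ℝ}

theorem armInfluence_eq_add_div (s : 𝒮) (z w : ℝ) (x : 𝒳) :
    armInfluence μ S X Y p p' τ q f g m n s z x =
      armInfluence μ S X Y p p' τ q f g m n s w x + (w - z) / (p s * f) := by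
  simp only [armInfluence]
  ring

theorem measurable_armInfluence [MeasurableSpace 𝒳] (hm : ∀ s, Measurable (m s))
    (hn : ∀ s, Measurable (n s)) (s : 𝒮) {z : 𝒳 → ℝ} (hz : Measurable z) :
    Measurable fun x => armInfluence μ S X Y p p' τ q f g m n s (z x) x := by
  have := hm s
  have := hn s
  simp only [armInfluence]
  fun_prop

variable [MeasurableSpace 𝒮] [MeasurableSingletonClass 𝒮] [IsFiniteMeasure μ]

theorem integral_mul_eq_add_of_integral_sub_mul_eq_zero [Finite 𝒮] (hS : Measurable S)
    {T T' : Ω → ℝ} {a a' : 𝒮 → ℝ} (hT : MemLp T 2 μ) (hT' : MemLp T' 2 μ)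
    (ha : ∀ c : 𝒮 → ℝ, ∫ ω, (T ω - a (S ω)) * c (S ω) ∂μ = 0)
    (ha' : ∀ c : 𝒮 → ℝ, ∫ ω, (T' ω - a' (S ω)) * c (S ω) ∂μ = 0) :
    ∫ ω, T ω * T' ω ∂μ =
      ∫ ω, a (S ω) * a' (S ω) ∂μ + ∫ ω, (T ω - a (S ω)) * (T' ω - a' (S ω)) ∂μ := by
  calc ∫ ω, T ω * T' ω ∂μ
      = ∫ ω, (a (S ω) + (T ω - a (S ω))) * (a' (S ω) + (T' ω - a' (S ω))) ∂μ := by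
        congr 1 with ω
        ring
    _ = _ := integral_add_mul_add_of_integral_mul_eq_zero (a := fun ω => a (S ω))
        (r := fun ω => T ω - a (S ω)) (a' := fun ω => a' (S ω)) (r' := fun ω => T' ω - a' (S ω))
        (memLp_comp_of_finite hS a 2) (hT.sub (memLp_comp_of_finite hS a 2))
        (memLp_comp_of_finite hS a' 2) (hT'.sub (memLp_comp_of_finite hS a' 2))
        (by simpa only [mul_comm] using ha' a) (ha a')

theorem memLp_armInfluence [Finite 𝒮] (hS : Measurable S)
    (hm : MemLp (fun ω => m (S ω) (X ω)) 2 μ) (hn : MemLp (fun ω => n (S ω) (X ω)) 2 μ)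
    {z : Ω → ℝ} (hz : MemLp z 2 μ) :
    MemLp (fun ω => armInfluence μ S X Y p p' τ q f g m n (S ω) (z ω) (X ω)) 2 μ :=
  ((((memLp_const τ).sub hz).sub ((memLp_const τ).sub
    (memLp_comp_of_finite hS (condCDFS μ S Y q) 2))).sub
    ((hm.sub (memLp_comp_of_finite hS (modelMeanS μ S X m) 2)).mul_of_finite_left hS p')
    |>.div_of_finite_right hS fun s => p s * f).sub
    ((hn.sub (memLp_comp_of_finite hS (modelMeanS μ S X n) 2)).div_of_finite_right hS fun _ => g)

variable [MeasurableSpace 𝒳] {F : 𝒳 → 𝒮 → ℝ → ℝ}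

theorem IsCondCDF.memLp_armDeviation [Finite 𝒮] (hF : IsCondCDF μ Y S X F) (hS : Measurable S)
    (hX : Measurable X) (hm : MemLp (fun ω => m (S ω) (X ω)) 2 μ) :
    MemLp (armDeviation μ S X Y F τ q m) 2 μ :=
  (((memLp_const τ).sub (hF.memLp hS hX q 2)).sub
    ((memLp_const τ).sub (memLp_comp_of_finite hS (condCDFS μ S Y q) 2))).sub
    (hm.sub (memLp_comp_of_finite hS (modelMeanS μ S X m) 2))

theorem IsCondCDF.armDeviation_ae_eq_zero (hF : IsCondCDF μ Y S X F) (hY : Measurable Y)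
    (hS : Measurable S) (hX : Measurable X) (hp : ∀ s, 0 < μ {ω | S ω = s})
    (hm : ∀ᵐ ω ∂μ, m (S ω) (X ω) = τ - F (X ω) (S ω) q) :
    armDeviation μ S X Y F τ q m =ᵐ[μ] 0 := by
  filter_upwards [hm] with ω hω
  rw [armDeviation, hω, hF.modelMeanS_eq_of_ae_eq hY hS hX (hp (S ω)) hm, Pi.zero_apply]
  ring

variable [Fintype 𝒮]

theorem IsCondCDF.integral_mul_armInfluence_mul_sub_eq_zero (hF : IsCondCDF μ Y S X F)
    (hY : Measurable Y) (hS : Measurable S) (hX : Measurable X) (hm : ∀ s, Measurable (m s))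
    (hn : ∀ s, Measurable (n s)) (hmL : MemLp (fun ω => m (S ω) (X ω)) 2 μ)
    (hnL : MemLp (fun ω => n (S ω) (X ω)) 2 μ) (c : 𝒮 → ℝ) (t : ℝ) :
    ∫ ω, c (S ω) * armInfluence μ S X Y p p' τ q f g m n (S ω) (F (X ω) (S ω) q) (X ω) *
      (F (X ω) (S ω) t - if Y ω ≤ t then 1 else 0) ∂μ = 0 := by
  refine Eq.trans ?_ (hF.integral_sub_indicator_mul_eq_zero hY hS hX t
    (h := fun s x => c s * armInfluence μ S X Y p p' τ q f g m n s (F x s q) x)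
    (fun s => (measurable_armInfluence hm hn s (hF.measurable s q)).const_mul _)
    (((memLp_armInfluence hS hmL hnL (hF.memLp hS hX q 2)).mul_of_finite_left hS c).integrable
      one_le_two))
  congr 1 with ω
  ring

theorem IsCondCDF.integral_mul_armInfluence (hF : IsCondCDF μ Y S X F) (hY : Measurable Y)
    (hS : Measurable S) (hX : Measurable X) (hp : ∀ s, p s ≠ 0) {τ' q' f' g' : ℝ}
    {m' n' : 𝒮 → 𝒳 → ℝ} (hm : ∀ s, Measurable (m s)) (hn : ∀ s, Measurable (n s))
    (hm' : ∀ s, Measurable (m' s)) (hn' : ∀ s, Measurable (n' s))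
    (hmL : MemLp (fun ω => m (S ω) (X ω)) 2 μ) (hnL : MemLp (fun ω => n (S ω) (X ω)) 2 μ)
    (hmL' : MemLp (fun ω => m' (S ω) (X ω)) 2 μ) (hnL' : MemLp (fun ω => n' (S ω) (X ω)) 2 μ) :
    ∫ ω, p (S ω) *
        armInfluence μ S X Y p p' τ q f g m n (S ω) (if Y ω ≤ q then 1 else 0) (X ω) *
        armInfluence μ S X Y p p' τ' q' f' g' m' n' (S ω) (if Y ω ≤ q' then 1 else 0) (X ω) ∂μ =
      (∫ ω, (p (S ω))⁻¹ * ((τ - (if Y ω ≤ q then 1 else 0) - (τ - F (X ω) (S ω) q)) *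
          (τ' - (if Y ω ≤ q' then 1 else 0) - (τ' - F (X ω) (S ω) q'))) / (f * f') ∂μ) +
      ∫ ω, p (S ω) * armInfluence μ S X Y p p' τ q f g m n (S ω) (F (X ω) (S ω) q) (X ω) *
        armInfluence μ S X Y p p' τ' q' f' g' m' n' (S ω) (F (X ω) (S ω) q') (X ω) ∂μ := by
  set B : Ω → ℝ := fun ω =>
    armInfluence μ S X Y p p' τ q f g m n (S ω) (F (X ω) (S ω) q) (X ω)
  set B' : Ω → ℝ := fun ω =>
    armInfluence μ S X Y p p' τ' q' f' g' m' n' (S ω) (F (X ω) (S ω) q') (X ω)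
  set e : Ω → ℝ := fun ω => F (X ω) (S ω) q - if Y ω ≤ q then 1 else 0
  set e' : Ω → ℝ := fun ω => F (X ω) (S ω) q' - if Y ω ≤ q' then 1 else 0
  have hB : MemLp B 2 μ := memLp_armInfluence hS hmL hnL (hF.memLp hS hX q 2)
  have hB' : MemLp B' 2 μ := memLp_armInfluence hS hmL' hnL' (hF.memLp hS hX q' 2)
  have he : MemLp e 2 μ := (hF.memLp hS hX q 2).sub (memLp_indicator_le hY q 2)
  have he' : MemLp e' 2 μ := (hF.memLp hS hX q' 2).sub (memLp_indicator_le hY q' 2)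
  have hcross : ∫ ω, p (S ω) * B ω * (e' ω / (p (S ω) * f')) ∂μ = 0 :=
    calc _ = ∫ ω, p (S ω) / (p (S ω) * f') * B ω * e' ω ∂μ := by
          congr 1 with ω
          ring
      _ = 0 := hF.integral_mul_armInfluence_mul_sub_eq_zero hY hS hX hm hn hmL hnL
          (fun s => p s / (p s * f')) q'
  have hcross' : ∫ ω, p (S ω) * (e ω / (p (S ω) * f)) * B' ω ∂μ = 0 :=
    calc _ = ∫ ω, p (S ω) / (p (S ω) * f) * B' ω * e ω ∂μ := by
          congr 1 with ω
          ring
      _ = 0 := hF.integral_mul_armInfluence_mul_sub_eq_zero hY hS hX hm' hn' hmL' hnL'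
          (fun s => p s / (p s * f)) q
  calc _ = ∫ ω, (p (S ω) * B ω + p (S ω) * (e ω / (p (S ω) * f))) *
          (B' ω + e' ω / (p (S ω) * f')) ∂μ := by
        congr 1 with ω
        rw [armInfluence_eq_add_div (S ω) (if Y ω ≤ q then 1 else 0) (F (X ω) (S ω) q) (X ω),
          armInfluence_eq_add_div (S ω) (if Y ω ≤ q' then 1 else 0) (F (X ω) (S ω) q') (X ω)]
        ring
    _ = _ := by
        rw [integral_add_mul_add_of_integral_mul_eq_zero (hB.mul_of_finite_left hS p)
          ((he.div_of_finite_right hS fun s => p s * f).mul_of_finite_left hS p) hB'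
          (he'.div_of_finite_right hS fun s => p s * f') hcross hcross', add_comm]
        congr 2 with ω
        field_simp [hp (S ω)]
        ring

end Decomposition

/-- With `x, y, z, w = δ₁ / f₁, δ̄₁ / f₁, δ₀ / f₀, δ̄₀ / f₀`, the left side is
`π B₁ B₁' + (1 - π) B₀ B₀' - D D'` and the right side is `u u'`. -/
theorem weighted_projection_identity {p : ℝ} (hp₀ : 0 < p) (hp₁ : p < 1)
    (x y z w x' y' z' w' : ℝ) :
    p * ((x - (1 - p) * y) / p - w) * ((x' - (1 - p) * y') / p - w') +
      (1 - p) * ((z - p * w) / (1 - p) - y) * ((z' - p * w') / (1 - p) - y') -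
      (x - z) * (x' - z') =
    (√((1 - p) / p) * (x - y) + √(p / (1 - p)) * (z - w)) *
      (√((1 - p) / p) * (x' - y') + √(p / (1 - p)) * (z' - w')) := by
  have hq₀ : 0 < 1 - p := sub_pos.2 hp₁
  have ha : √((1 - p) / p) * √((1 - p) / p) = (1 - p) / p := Real.mul_self_sqrt (by positivity)
  have hc : √(p / (1 - p)) * √(p / (1 - p)) = p / (1 - p) := Real.mul_self_sqrt (by positivity)
  have hac : √((1 - p) / p) * √(p / (1 - p)) = 1 := by
    rw [← Real.sqrt_mul (by positivity), div_mul_div_comm, mul_comm (1 - p),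
      div_self (by positivity), Real.sqrt_one]
  rw [show (√((1 - p) / p) * (x - y) + √(p / (1 - p)) * (z - w)) *
      (√((1 - p) / p) * (x' - y') + √(p / (1 - p)) * (z' - w')) =
      (1 - p) / p * ((x - y) * (x' - y')) + ((x - y) * (z' - w') + (z - w) * (x' - y')) +
        p / (1 - p) * ((z - w) * (z' - w')) by
    linear_combination ((x - y) * (x' - y')) * ha +
      ((x - y) * (z' - w') + (z - w) * (x' - y')) * hac + ((z - w) * (z' - w')) * hc]
  field_simp
  ring

section Covariance

variable {Ω 𝒮 𝒳 ι : Type*} [MeasurableSpace Ω]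
  (μ : Measure Ω) (S : Ω → 𝒮) (X : Ω → 𝒳) (Y₁ Y₀ : Ω → ℝ) (F₁ F₀ : 𝒳 → 𝒮 → ℝ → ℝ)
  (π : 𝒮 → ℝ) (τ q₁ q₀ f₁ f₀ : ι → ℝ) (m₁ m₀ : ι → 𝒮 → 𝒳 → ℝ)

/-- `φ_S(τ, s)` when `aᵢ = P(Y(i) ≤ qᵢ | S = s)`, and `m₁(τ, s, x) / f₁ - m₀(τ, s, x) / f₀`
when `aᵢ = Fᵢ x s qᵢ`. -/
def armContrast (τ f₁ f₀ a₁ a₀ : ℝ) : ℝ :=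
  (τ - a₁) / f₁ - (τ - a₀) / f₀

/-- `Σ(τ_k, τ_l)`; `f₁ k` and `f₀ k` stand for the densities of `Y(1)` and `Y(0)` at their
quantiles `q₁ k` and `q₀ k`. -/
def adjustedCov (k l : ι) : ℝ :=
  (∫ ω, π (S ω) *
      armInfluence μ S X Y₁ π (fun s => 1 - π s) (τ k) (q₁ k) (f₁ k) (f₀ k) (m₁ k) (m₀ k) (S ω)
        (if Y₁ ω ≤ q₁ k then 1 else 0) (X ω) *
      armInfluence μ S X Y₁ π (fun s => 1 - π s) (τ l) (q₁ l) (f₁ l) (f₀ l) (m₁ l) (m₀ l) (S ω)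
        (if Y₁ ω ≤ q₁ l then 1 else 0) (X ω) ∂μ) +
    (∫ ω, (1 - π (S ω)) *
      armInfluence μ S X Y₀ (fun s => 1 - π s) π (τ k) (q₀ k) (f₀ k) (f₁ k) (m₀ k) (m₁ k) (S ω)
        (if Y₀ ω ≤ q₀ k then 1 else 0) (X ω) *
      armInfluence μ S X Y₀ (fun s => 1 - π s) π (τ l) (q₀ l) (f₀ l) (f₁ l) (m₀ l) (m₁ l) (S ω)
        (if Y₀ ω ≤ q₀ l then 1 else 0) (X ω) ∂μ) +
    ∫ ω, armContrast (τ k) (f₁ k) (f₀ k) (condCDFS μ S Y₁ (q₁ k) (S ω))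
        (condCDFS μ S Y₀ (q₀ k) (S ω)) *
      armContrast (τ l) (f₁ l) (f₀ l) (condCDFS μ S Y₁ (q₁ l) (S ω))
        (condCDFS μ S Y₀ (q₀ l) (S ω)) ∂μ

/-- `Σ*(τ_k, τ_l)`. -/
def optimalCov (k l : ι) : ℝ :=
  (∫ ω, (π (S ω))⁻¹ *
      ((τ k - (if Y₁ ω ≤ q₁ k then 1 else 0) - (τ k - F₁ (X ω) (S ω) (q₁ k))) *
        (τ l - (if Y₁ ω ≤ q₁ l then 1 else 0) - (τ l - F₁ (X ω) (S ω) (q₁ l)))) /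
      (f₁ k * f₁ l) ∂μ) +
    (∫ ω, (1 - π (S ω))⁻¹ *
      ((τ k - (if Y₀ ω ≤ q₀ k then 1 else 0) - (τ k - F₀ (X ω) (S ω) (q₀ k))) *
        (τ l - (if Y₀ ω ≤ q₀ l then 1 else 0) - (τ l - F₀ (X ω) (S ω) (q₀ l)))) /
      (f₀ k * f₀ l) ∂μ) +
    ∫ ω, armContrast (τ k) (f₁ k) (f₀ k) (F₁ (X ω) (S ω) (q₁ k)) (F₀ (X ω) (S ω) (q₀ k)) *
      armContrast (τ l) (f₁ l) (f₀ l) (F₁ (X ω) (S ω) (q₁ l)) (F₀ (X ω) (S ω) (q₀ l)) ∂μ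

/-- `u(τ_k)`. -/
def adjustmentGap (k : ι) (ω : Ω) : ℝ :=
  √((1 - π (S ω)) / π (S ω)) * (armDeviation μ S X Y₁ F₁ (τ k) (q₁ k) (m₁ k) ω / f₁ k) +
    √(π (S ω) / (1 - π (S ω))) * (armDeviation μ S X Y₀ F₀ (τ k) (q₀ k) (m₀ k) ω / f₀ k)

variable {μ S X Y₁ Y₀ F₁ F₀ π τ q₁ q₀ f₁ f₀ m₁ m₀}

theorem adjustmentGap_mul_adjustmentGap (hπ : ∀ s, 0 < π s ∧ π s < 1) (k l : ι) (ω : Ω) :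
    adjustmentGap μ S X Y₁ Y₀ F₁ F₀ π τ q₁ q₀ f₁ f₀ m₁ m₀ k ω *
        adjustmentGap μ S X Y₁ Y₀ F₁ F₀ π τ q₁ q₀ f₁ f₀ m₁ m₀ l ω =
      π (S ω) *
          armInfluence μ S X Y₁ π (fun s => 1 - π s) (τ k) (q₁ k) (f₁ k) (f₀ k) (m₁ k) (m₀ k)
            (S ω) (F₁ (X ω) (S ω) (q₁ k)) (X ω) *
          armInfluence μ S X Y₁ π (fun s => 1 - π s) (τ l) (q₁ l) (f₁ l) (f₀ l) (m₁ l) (m₀ l)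
            (S ω) (F₁ (X ω) (S ω) (q₁ l)) (X ω) +
        (1 - π (S ω)) *
          armInfluence μ S X Y₀ (fun s => 1 - π s) π (τ k) (q₀ k) (f₀ k) (f₁ k) (m₀ k) (m₁ k)
            (S ω) (F₀ (X ω) (S ω) (q₀ k)) (X ω) *
          armInfluence μ S X Y₀ (fun s => 1 - π s) π (τ l) (q₀ l) (f₀ l) (f₁ l) (m₀ l) (m₁ l)
            (S ω) (F₀ (X ω) (S ω) (q₀ l)) (X ω) -
        (armContrast (τ k) (f₁ k) (f₀ k) (F₁ (X ω) (S ω) (q₁ k)) (F₀ (X ω) (S ω) (q₀ k)) -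
            armContrast (τ k) (f₁ k) (f₀ k) (condCDFS μ S Y₁ (q₁ k) (S ω))
              (condCDFS μ S Y₀ (q₀ k) (S ω))) *
          (armContrast (τ l) (f₁ l) (f₀ l) (F₁ (X ω) (S ω) (q₁ l)) (F₀ (X ω) (S ω) (q₀ l)) -
            armContrast (τ l) (f₁ l) (f₀ l) (condCDFS μ S Y₁ (q₁ l) (S ω))
              (condCDFS μ S Y₀ (q₀ l) (S ω))) := by
  set δ₁ := fun j => (τ j - F₁ (X ω) (S ω) (q₁ j)) - (τ j - condCDFS μ S Y₁ (q₁ j) (S ω))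
  set δ₀ := fun j => (τ j - F₀ (X ω) (S ω) (q₀ j)) - (τ j - condCDFS μ S Y₀ (q₀ j) (S ω))
  set b₁ := fun j => m₁ j (S ω) (X ω) - modelMeanS μ S X (m₁ j) (S ω)
  set b₀ := fun j => m₀ j (S ω) (X ω) - modelMeanS μ S X (m₀ j) (S ω)
  -- `ring` cannot split `((1 - π) * f)⁻¹`, so the denominators are split first.
  simp only [adjustmentGap, armDeviation, armInfluence, armContrast, div_mul_eq_div_div_swap]
  linear_combination (weighted_projection_identity (hπ (S ω)).1 (hπ (S ω)).2
    (δ₁ k / f₁ k) (b₁ k / f₁ k) (δ₀ k / f₀ k) (b₀ k / f₀ k)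
    (δ₁ l / f₁ l) (b₁ l / f₁ l) (δ₀ l / f₀ l) (b₀ l / f₀ l)).symm

variable [MeasurableSpace 𝒳] [IsFiniteMeasure μ] [MeasurableSpace 𝒮]
  [MeasurableSingletonClass 𝒮]

theorem adjustmentGap_ae_eq_zero (hF₁ : IsCondCDF μ Y₁ S X F₁) (hF₀ : IsCondCDF μ Y₀ S X F₀)
    (hY₁ : Measurable Y₁) (hY₀ : Measurable Y₀) (hS : Measurable S) (hX : Measurable X)
    (hp : ∀ s, 0 < μ {ω | S ω = s}) {k : ι}
    (h₁ : ∀ᵐ ω ∂μ, m₁ k (S ω) (X ω) = τ k - F₁ (X ω) (S ω) (q₁ k))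
    (h₀ : ∀ᵐ ω ∂μ, m₀ k (S ω) (X ω) = τ k - F₀ (X ω) (S ω) (q₀ k)) :
    adjustmentGap μ S X Y₁ Y₀ F₁ F₀ π τ q₁ q₀ f₁ f₀ m₁ m₀ k =ᵐ[μ] 0 := by
  filter_upwards [hF₁.armDeviation_ae_eq_zero hY₁ hS hX hp h₁,
    hF₀.armDeviation_ae_eq_zero hY₀ hS hX hp h₀] with ω h₁ h₀
  simp [adjustmentGap, h₁, h₀]

variable [Fintype 𝒮]

theorem memLp_adjustmentGap (hF₁ : IsCondCDF μ Y₁ S X F₁) (hF₀ : IsCondCDF μ Y₀ S X F₀)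
    (hS : Measurable S) (hX : Measurable X) (hm₁ : ∀ k, MemLp (fun ω => m₁ k (S ω) (X ω)) 2 μ)
    (hm₀ : ∀ k, MemLp (fun ω => m₀ k (S ω) (X ω)) 2 μ) (k : ι) :
    MemLp (adjustmentGap μ S X Y₁ Y₀ F₁ F₀ π τ q₁ q₀ f₁ f₀ m₁ m₀ k) 2 μ :=
  ((hF₁.memLp_armDeviation hS hX (hm₁ k)).div_of_finite_right hS (fun _ => f₁ k)
      |>.mul_of_finite_left hS fun s => √((1 - π s) / π s)).add
    ((hF₀.memLp_armDeviation hS hX (hm₀ k)).div_of_finite_right hS (fun _ => f₀ k)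
      |>.mul_of_finite_left hS fun s => √(π s / (1 - π s)))

theorem memLp_armContrast (hF₁ : IsCondCDF μ Y₁ S X F₁) (hF₀ : IsCondCDF μ Y₀ S X F₀)
    (hS : Measurable S) (hX : Measurable X) (j : ι) :
    MemLp (fun ω =>
      armContrast (τ j) (f₁ j) (f₀ j) (F₁ (X ω) (S ω) (q₁ j)) (F₀ (X ω) (S ω) (q₀ j))) 2 μ :=
  (((memLp_const (τ j)).sub (hF₁.memLp hS hX (q₁ j) 2)).div_of_finite_right hS fun _ => f₁ j).sub
    (((memLp_const (τ j)).sub (hF₀.memLp hS hX (q₀ j) 2)).div_of_finite_right hS fun _ => f₀ j)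

theorem integral_armContrast_sub_mul_eq_zero (hF₁ : IsCondCDF μ Y₁ S X F₁)
    (hF₀ : IsCondCDF μ Y₀ S X F₀) (hY₁ : Measurable Y₁) (hY₀ : Measurable Y₀)
    (hS : Measurable S) (hX : Measurable X) (hp : ∀ s, 0 < μ {ω | S ω = s}) (j : ι)
    (c : 𝒮 → ℝ) :
    ∫ ω, (armContrast (τ j) (f₁ j) (f₀ j) (F₁ (X ω) (S ω) (q₁ j)) (F₀ (X ω) (S ω) (q₀ j)) -
        armContrast (τ j) (f₁ j) (f₀ j) (condCDFS μ S Y₁ (q₁ j) (S ω))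
          (condCDFS μ S Y₀ (q₀ j) (S ω))) * c (S ω) ∂μ = 0 := by
  have i₁ : Integrable (fun ω => (condCDFS μ S Y₁ (q₁ j) (S ω) - F₁ (X ω) (S ω) (q₁ j)) *
      (c (S ω) / f₁ j)) μ :=
    ((memLp_comp_of_finite hS _ 1).sub (hF₁.memLp hS hX _ 1)).integrable_mul
      (memLp_comp_of_finite hS (fun s => c s / f₁ j) ⊤)
  have i₀ : Integrable (fun ω => (condCDFS μ S Y₀ (q₀ j) (S ω) - F₀ (X ω) (S ω) (q₀ j)) *
      (c (S ω) / f₀ j)) μ :=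
    ((memLp_comp_of_finite hS _ 1).sub (hF₀.memLp hS hX _ 1)).integrable_mul
      (memLp_comp_of_finite hS (fun s => c s / f₀ j) ⊤)
  calc _ = ∫ ω, (condCDFS μ S Y₁ (q₁ j) (S ω) - F₁ (X ω) (S ω) (q₁ j)) * (c (S ω) / f₁ j) ∂μ -
        ∫ ω, (condCDFS μ S Y₀ (q₀ j) (S ω) - F₀ (X ω) (S ω) (q₀ j)) * (c (S ω) / f₀ j) ∂μ := by
        rw [← integral_sub i₁ i₀]
        congr 1 with ω
        simp only [armContrast]
        ring
    _ = 0 := by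
        rw [hF₁.integral_condCDFS_sub_mul_eq_zero hY₁ hS hX hp (q₁ j) fun s => c s / f₁ j,
          hF₀.integral_condCDFS_sub_mul_eq_zero hY₀ hS hX hp (q₀ j) fun s => c s / f₀ j, sub_zero]

theorem adjustedCov_sub_optimalCov (hF₁ : IsCondCDF μ Y₁ S X F₁) (hF₀ : IsCondCDF μ Y₀ S X F₀)
    (hY₁ : Measurable Y₁) (hY₀ : Measurable Y₀) (hS : Measurable S) (hX : Measurable X)
    (hp : ∀ s, 0 < μ {ω | S ω = s}) (hπ : ∀ s, 0 < π s ∧ π s < 1)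
    (hm₁ : ∀ k s, Measurable (m₁ k s)) (hm₀ : ∀ k s, Measurable (m₀ k s))
    (hm₁L : ∀ k, MemLp (fun ω => m₁ k (S ω) (X ω)) 2 μ)
    (hm₀L : ∀ k, MemLp (fun ω => m₀ k (S ω) (X ω)) 2 μ) (k l : ι) :
    adjustedCov μ S X Y₁ Y₀ π τ q₁ q₀ f₁ f₀ m₁ m₀ k l -
        optimalCov μ S X Y₁ Y₀ F₁ F₀ π τ q₁ q₀ f₁ f₀ k l =
      ∫ ω, adjustmentGap μ S X Y₁ Y₀ F₁ F₀ π τ q₁ q₀ f₁ f₀ m₁ m₀ k ω *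
        adjustmentGap μ S X Y₁ Y₀ F₁ F₀ π τ q₁ q₀ f₁ f₀ m₁ m₀ l ω ∂μ := by
  have arm₁ := hF₁.integral_mul_armInfluence (p' := fun s => 1 - π s) (τ := τ k) (q := q₁ k)
    (f := f₁ k) (g := f₀ k) (τ' := τ l) (q' := q₁ l) (f' := f₁ l) (g' := f₀ l) hY₁ hS hX
    (fun s => (hπ s).1.ne') (hm₁ k) (hm₀ k) (hm₁ l) (hm₀ l) (hm₁L k) (hm₀L k) (hm₁L l) (hm₀L l)
  have arm₀ := hF₀.integral_mul_armInfluence (p := fun s => 1 - π s) (p' := π) (τ := τ k)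
    (q := q₀ k) (f := f₀ k) (g := f₁ k) (τ' := τ l) (q' := q₀ l) (f' := f₀ l) (g' := f₁ l) hY₀ hS
    hX (fun s => (sub_pos.2 (hπ s).2).ne') (hm₀ k) (hm₁ k) (hm₀ l) (hm₁ l) (hm₀L k) (hm₁L k)
    (hm₀L l) (hm₁L l)
  set a : ι → 𝒮 → ℝ := fun j s =>
    armContrast (τ j) (f₁ j) (f₀ j) (condCDFS μ S Y₁ (q₁ j) s) (condCDFS μ S Y₀ (q₀ j) s)
  have strata := integral_mul_eq_add_of_integral_sub_mul_eq_zero hS (a := a k) (a' := a l)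
    (memLp_armContrast hF₁ hF₀ hS hX k) (memLp_armContrast hF₁ hF₀ hS hX l)
    (integral_armContrast_sub_mul_eq_zero hF₁ hF₀ hY₁ hY₀ hS hX hp k)
    (integral_armContrast_sub_mul_eq_zero hF₁ hF₀ hY₁ hY₀ hS hX hp l)
  have hB₁ : ∀ j, MemLp (fun ω => armInfluence μ S X Y₁ π (fun s => 1 - π s) (τ j) (q₁ j)
      (f₁ j) (f₀ j) (m₁ j) (m₀ j) (S ω) (F₁ (X ω) (S ω) (q₁ j)) (X ω)) 2 μ := fun j =>
    memLp_armInfluence hS (hm₁L j) (hm₀L j) (hF₁.memLp hS hX _ 2)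
  have hB₀ : ∀ j, MemLp (fun ω => armInfluence μ S X Y₀ (fun s => 1 - π s) π (τ j) (q₀ j)
      (f₀ j) (f₁ j) (m₀ j) (m₁ j) (S ω) (F₀ (X ω) (S ω) (q₀ j)) (X ω)) 2 μ := fun j =>
    memLp_armInfluence hS (hm₀L j) (hm₁L j) (hF₀.memLp hS hX _ 2)
  have hD : ∀ j, MemLp (fun ω => armContrast (τ j) (f₁ j) (f₀ j) (F₁ (X ω) (S ω) (q₁ j))
      (F₀ (X ω) (S ω) (q₀ j)) - a j (S ω)) 2 μ := fun j =>
    (memLp_armContrast hF₁ hF₀ hS hX j).sub (memLp_comp_of_finite hS (a j) 2)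
  have i₁ := ((hB₁ k).mul_of_finite_left hS π).integrable_mul (hB₁ l)
  have i₀ := ((hB₀ k).mul_of_finite_left hS fun s => 1 - π s).integrable_mul (hB₀ l)
  simp only [a] at strata
  beta_reduce at arm₀
  simp_rw [adjustmentGap_mul_adjustmentGap hπ k l]
  rw [integral_sub, integral_add, adjustedCov, optimalCov]
  · linarith
  exacts [i₁, i₀, i₁.add i₀, (hD k).integrable_mul (hD l)]

end Covariance

theorem adjusted_qte_covariance_decomposition_general
    {Ω : Type*} [MeasurableSpace Ω] (μ : Measure Ω) [IsProbabilityMeasure μ]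
    {𝒮 : Type*} [Fintype 𝒮] [MeasurableSpace 𝒮] [MeasurableSingletonClass 𝒮]
    {𝒳 : Type*} [MeasurableSpace 𝒳]
    (Y1 Y0 : Ω → ℝ) (S : Ω → 𝒮) (X : Ω → 𝒳)
    (hY1m : Measurable Y1) (hY0m : Measurable Y0) (hSm : Measurable S) (hXm : Measurable X)
    (π : 𝒮 → ℝ) (hπ : ∀ s, 0 < π s ∧ π s < 1)
    (hp : ∀ s, 0 < μ {ω | S ω = s})
    (K : ℕ) (τ : Fin K → ℝ)
    -- τ-th quantiles of Y(1) and Y(0)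
    (q1 q0 : Fin K → ℝ)
    -- Lebesgue densities of Y(1) and Y(0), positive at the quantiles
    (fd1 fd0 : ℝ → ℝ)
    -- conditional CDFs of Y(1), Y(0) given (X, S):  P(Y(a) ≤ t | X = x, S = s)
    (F1 F0 : 𝒳 → 𝒮 → ℝ → ℝ)
    (hF1meas : ∀ s t, Measurable (fun x => F1 x s t))
    (hF0meas : ∀ s t, Measurable (fun x => F0 x s t))
    (hF1rng : ∀ x s t, F1 x s t ∈ Set.Icc (0 : ℝ) 1)
    (hF0rng : ∀ x s t, F0 x s t ∈ Set.Icc (0 : ℝ) 1)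
    (hF1 : ∀ (s : 𝒮) (t : ℝ) (B : Set 𝒳), MeasurableSet B →
      (μ ({ω | Y1 ω ≤ t} ∩ {ω | S ω = s} ∩ (X ⁻¹' B))).toReal =
        ∫ ω in {ω | S ω = s} ∩ (X ⁻¹' B), F1 (X ω) s t ∂μ)
    (hF0 : ∀ (s : 𝒮) (t : ℝ) (B : Set 𝒳), MeasurableSet B →
      (μ ({ω | Y0 ω ≤ t} ∩ {ω | S ω = s} ∩ (X ⁻¹' B))).toReal =
        ∫ ω in {ω | S ω = s} ∩ (X ⁻¹' B), F0 (X ω) s t ∂μ)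
    -- working models, square integrable conditionally on every stratum
    (mbar1 mbar0 : Fin K → 𝒮 → 𝒳 → ℝ)
    (hmbar1m : ∀ k s, Measurable (mbar1 k s)) (hmbar0m : ∀ k s, Measurable (mbar0 k s))
    (hmom1 : ∀ k, Integrable (fun ω => (mbar1 k (S ω) (X ω)) ^ 2) μ)
    (hmom0 : ∀ k, Integrable (fun ω => (mbar0 k (S ω) (X ω)) ^ 2) μ) :
    -- conditional probabilities given S, true specifications, influence functions
    let G1 : Fin K → 𝒮 → ℝ := fun k s =>
      condMeanS μ S (fun ω => if Y1 ω ≤ q1 k then (1 : ℝ) else 0) s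
    let G0 : Fin K → 𝒮 → ℝ := fun k s =>
      condMeanS μ S (fun ω => if Y0 ω ≤ q0 k then (1 : ℝ) else 0) s
    let m1x : Fin K → 𝒮 → 𝒳 → ℝ := fun k s x => τ k - F1 x s (q1 k)
    let m0x : Fin K → 𝒮 → 𝒳 → ℝ := fun k s x => τ k - F0 x s (q0 k)
    let mE1 : Fin K → 𝒮 → ℝ := fun k s => condMeanS μ S (fun ω => mbar1 k s (X ω)) s
    let mE0 : Fin K → 𝒮 → ℝ := fun k s => condMeanS μ S (fun ω => mbar0 k s (X ω)) s
    let phi1 : Fin K → 𝒮 → ℝ → 𝒳 → ℝ := fun k s y x =>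
      ((τ k - (if y ≤ q1 k then (1 : ℝ) else 0) - (τ k - G1 k s)) -
          (1 - π s) * (mbar1 k s x - mE1 k s)) / (π s * fd1 (q1 k)) -
        (mbar0 k s x - mE0 k s) / fd0 (q0 k)
    let phi0 : Fin K → 𝒮 → ℝ → 𝒳 → ℝ := fun k s y x =>
      ((τ k - (if y ≤ q0 k then (1 : ℝ) else 0) - (τ k - G0 k s)) -
          π s * (mbar0 k s x - mE0 k s)) / ((1 - π s) * fd0 (q0 k)) -
        (mbar1 k s x - mE1 k s) / fd1 (q1 k)
    let phiS : Fin K → 𝒮 → ℝ := fun k s =>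
      (τ k - G1 k s) / fd1 (q1 k) - (τ k - G0 k s) / fd0 (q0 k)
    let Sig : Fin K → Fin K → ℝ := fun k l =>
      (∫ ω, π (S ω) * phi1 k (S ω) (Y1 ω) (X ω) * phi1 l (S ω) (Y1 ω) (X ω) ∂μ) +
        (∫ ω, (1 - π (S ω)) * phi0 k (S ω) (Y0 ω) (X ω) * phi0 l (S ω) (Y0 ω) (X ω) ∂μ) +
        (∫ ω, phiS k (S ω) * phiS l (S ω) ∂μ)
    let SigStar : Fin K → Fin K → ℝ := fun k l =>
      (∫ ω, (π (S ω))⁻¹ *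
          ((τ k - (if Y1 ω ≤ q1 k then (1 : ℝ) else 0) - m1x k (S ω) (X ω)) *
            (τ l - (if Y1 ω ≤ q1 l then (1 : ℝ) else 0) - m1x l (S ω) (X ω))) /
          (fd1 (q1 k) * fd1 (q1 l)) ∂μ) +
        (∫ ω, (1 - π (S ω))⁻¹ *
          ((τ k - (if Y0 ω ≤ q0 k then (1 : ℝ) else 0) - m0x k (S ω) (X ω)) *
            (τ l - (if Y0 ω ≤ q0 l then (1 : ℝ) else 0) - m0x l (S ω) (X ω))) /
          (fd0 (q0 k) * fd0 (q0 l)) ∂μ) +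
        (∫ ω, (m1x k (S ω) (X ω) / fd1 (q1 k) - m0x k (S ω) (X ω) / fd0 (q0 k)) *
          (m1x l (S ω) (X ω) / fd1 (q1 l) - m0x l (S ω) (X ω) / fd0 (q0 l)) ∂μ)
    let u : Fin K → Ω → ℝ := fun k ω =>
      Real.sqrt ((1 - π (S ω)) / π (S ω)) *
          (((m1x k (S ω) (X ω) - (τ k - G1 k (S ω))) -
            (mbar1 k (S ω) (X ω) - mE1 k (S ω))) / fd1 (q1 k)) +
        Real.sqrt (π (S ω) / (1 - π (S ω))) *
          (((m0x k (S ω) (X ω) - (τ k - G0 k (S ω))) -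
            (mbar0 k (S ω) (X ω) - mE0 k (S ω))) / fd0 (q0 k))
    (∀ k l : Fin K, Sig k l - SigStar k l = ∫ ω, u k ω * u l ω ∂μ) ∧
      Matrix.PosSemidef (Matrix.of fun k l : Fin K => Sig k l - SigStar k l) ∧
      ((∀ k : Fin K,
          (∀ᵐ ω ∂μ, mbar1 k (S ω) (X ω) = m1x k (S ω) (X ω)) ∧
          (∀ᵐ ω ∂μ, mbar0 k (S ω) (X ω) = m0x k (S ω) (X ω))) →
        (Matrix.of fun k l : Fin K => Sig k l - SigStar k l) = 0) := by
  intro G1 G0 m1x m0x mE1 mE0 phi1 phi0 phiS Sig SigStar u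
  have hF1c : IsCondCDF μ Y1 S X F1 := ⟨hF1meas, hF1rng, hF1⟩
  have hF0c : IsCondCDF μ Y0 S X F0 := ⟨hF0meas, hF0rng, hF0⟩
  have hM1 : ∀ k, MemLp (fun ω => mbar1 k (S ω) (X ω)) 2 μ := fun k =>
    (memLp_two_iff_integrable_sq
      (measurable_comp_pair hSm hXm (hmbar1m k)).aestronglyMeasurable).2 (hmom1 k)
  have hM0 : ∀ k, MemLp (fun ω => mbar0 k (S ω) (X ω)) 2 μ := fun k =>
    (memLp_two_iff_integrable_sq
      (measurable_comp_pair hSm hXm (hmbar0m k)).aestronglyMeasurable).2 (hmom0 k)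
  have key : ∀ k l, Sig k l - SigStar k l = ∫ ω, u k ω * u l ω ∂μ :=
    adjustedCov_sub_optimalCov (f₁ := fun k => fd1 (q1 k)) (f₀ := fun k => fd0 (q0 k))
      hF1c hF0c hY1m hY0m hSm hXm hp hπ hmbar1m hmbar0m hM1 hM0
  have hgram : (Matrix.of fun k l => Sig k l - SigStar k l) =
      Matrix.of fun k l => ∫ ω, u k ω * u l ω ∂μ :=
    Matrix.ext key
  refine ⟨key, hgram ▸ posSemidef_of_integral_mul
    (memLp_adjustmentGap hF1c hF0c hSm hXm hM1 hM0), fun hcorrect =>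
      hgram ▸ Matrix.ext fun k l => ?_⟩
  have hu : u k =ᵐ[μ] 0 := adjustmentGap_ae_eq_zero (π := π) (f₁ := fun k => fd1 (q1 k))
    (f₀ := fun k => fd0 (q0 k)) hF1c hF0c hY1m hY0m hSm hXm hp (hcorrect k).1 (hcorrect k).2
  exact integral_eq_zero_of_ae (hu.mono fun ω hω => by simp [hω])

/-- **Variance decomposition for regression-adjusted QTE estimators**
(Theorem 3.1 of Jiang, Phillips, Tao and Zhang): the difference between the asymptotic
covariance kernel `Σ` of the adjusted estimator and its working-model-free part `Σ*`
equals `E[u(τ)u(τ′)]`; hence the covariance matrix over any finite set of quantile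
indices is minimized, in the positive semidefinite sense, when the working models are
correctly specified, in which case the difference is the zero matrix. -/
theorem adjusted_qte_covariance_decomposition
    {Ω : Type*} [MeasurableSpace Ω] (μ : Measure Ω) [IsProbabilityMeasure μ]
    {𝒮 : Type*} [Fintype 𝒮] [MeasurableSpace 𝒮] [MeasurableSingletonClass 𝒮]
    {𝒳 : Type*} [MeasurableSpace 𝒳]
    (Y1 Y0 : Ω → ℝ) (S : Ω → 𝒮) (X : Ω → 𝒳)
    (hY1m : Measurable Y1) (hY0m : Measurable Y0) (hSm : Measurable S) (hXm : Measurable X)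
    (π : 𝒮 → ℝ) (hπ : ∀ s, 0 < π s ∧ π s < 1)
    (hp : ∀ s, 0 < μ {ω | S ω = s})
    (K : ℕ) (τ : Fin K → ℝ) (hτ : ∀ k, τ k ∈ Set.Ioo (0 : ℝ) 1)
    -- τ-th quantiles of Y(1) and Y(0)
    (q1 q0 : Fin K → ℝ)
    (hq1 : ∀ k, (μ {ω | Y1 ω ≤ q1 k}).toReal = τ k)
    (hq0 : ∀ k, (μ {ω | Y0 ω ≤ q0 k}).toReal = τ k)
    -- Lebesgue densities of Y(1) and Y(0), positive at the quantiles
    (fd1 fd0 : ℝ → ℝ) (hfd1m : Measurable fd1) (hfd0m : Measurable fd0)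
    (hcdf1 : ∀ t, (μ {ω | Y1 ω ≤ t}).toReal = ∫ y in Set.Iic t, fd1 y)
    (hcdf0 : ∀ t, (μ {ω | Y0 ω ≤ t}).toReal = ∫ y in Set.Iic t, fd0 y)
    (hfd1pos : ∀ k, 0 < fd1 (q1 k)) (hfd0pos : ∀ k, 0 < fd0 (q0 k))
    -- conditional CDFs of Y(1), Y(0) given (X, S):  P(Y(a) ≤ t | X = x, S = s)
    (F1 F0 : 𝒳 → 𝒮 → ℝ → ℝ)
    (hF1meas : ∀ s t, Measurable (fun x => F1 x s t))
    (hF0meas : ∀ s t, Measurable (fun x => F0 x s t))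
    (hF1rng : ∀ x s t, F1 x s t ∈ Set.Icc (0 : ℝ) 1)
    (hF0rng : ∀ x s t, F0 x s t ∈ Set.Icc (0 : ℝ) 1)
    (hF1 : ∀ (s : 𝒮) (t : ℝ) (B : Set 𝒳), MeasurableSet B →
      (μ ({ω | Y1 ω ≤ t} ∩ {ω | S ω = s} ∩ (X ⁻¹' B))).toReal =
        ∫ ω in {ω | S ω = s} ∩ (X ⁻¹' B), F1 (X ω) s t ∂μ)
    (hF0 : ∀ (s : 𝒮) (t : ℝ) (B : Set 𝒳), MeasurableSet B →
      (μ ({ω | Y0 ω ≤ t} ∩ {ω | S ω = s} ∩ (X ⁻¹' B))).toReal =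
        ∫ ω in {ω | S ω = s} ∩ (X ⁻¹' B), F0 (X ω) s t ∂μ)
    -- working models, square integrable conditionally on every stratum
    (mbar1 mbar0 : Fin K → 𝒮 → 𝒳 → ℝ)
    (hmbar1m : ∀ k s, Measurable (mbar1 k s)) (hmbar0m : ∀ k s, Measurable (mbar0 k s))
    (hmom1 : ∀ k, Integrable (fun ω => (mbar1 k (S ω) (X ω)) ^ 2) μ)
    (hmom0 : ∀ k, Integrable (fun ω => (mbar0 k (S ω) (X ω)) ^ 2) μ) :
    -- conditional probabilities given S, true specifications, influence functions
    let G1 : Fin K → 𝒮 → ℝ := fun k s =>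
      condMeanS μ S (fun ω => if Y1 ω ≤ q1 k then (1 : ℝ) else 0) s
    let G0 : Fin K → 𝒮 → ℝ := fun k s =>
      condMeanS μ S (fun ω => if Y0 ω ≤ q0 k then (1 : ℝ) else 0) s
    let m1x : Fin K → 𝒮 → 𝒳 → ℝ := fun k s x => τ k - F1 x s (q1 k)
    let m0x : Fin K → 𝒮 → 𝒳 → ℝ := fun k s x => τ k - F0 x s (q0 k)
    let mE1 : Fin K → 𝒮 → ℝ := fun k s => condMeanS μ S (fun ω => mbar1 k s (X ω)) s
    let mE0 : Fin K → 𝒮 → ℝ := fun k s => condMeanS μ S (fun ω => mbar0 k s (X ω)) s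
    let phi1 : Fin K → 𝒮 → ℝ → 𝒳 → ℝ := fun k s y x =>
      ((τ k - (if y ≤ q1 k then (1 : ℝ) else 0) - (τ k - G1 k s)) -
          (1 - π s) * (mbar1 k s x - mE1 k s)) / (π s * fd1 (q1 k)) -
        (mbar0 k s x - mE0 k s) / fd0 (q0 k)
    let phi0 : Fin K → 𝒮 → ℝ → 𝒳 → ℝ := fun k s y x =>
      ((τ k - (if y ≤ q0 k then (1 : ℝ) else 0) - (τ k - G0 k s)) -
          π s * (mbar0 k s x - mE0 k s)) / ((1 - π s) * fd0 (q0 k)) -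
        (mbar1 k s x - mE1 k s) / fd1 (q1 k)
    let phiS : Fin K → 𝒮 → ℝ := fun k s =>
      (τ k - G1 k s) / fd1 (q1 k) - (τ k - G0 k s) / fd0 (q0 k)
    let Sig : Fin K → Fin K → ℝ := fun k l =>
      (∫ ω, π (S ω) * phi1 k (S ω) (Y1 ω) (X ω) * phi1 l (S ω) (Y1 ω) (X ω) ∂μ) +
        (∫ ω, (1 - π (S ω)) * phi0 k (S ω) (Y0 ω) (X ω) * phi0 l (S ω) (Y0 ω) (X ω) ∂μ) +
        (∫ ω, phiS k (S ω) * phiS l (S ω) ∂μ)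
    let SigStar : Fin K → Fin K → ℝ := fun k l =>
      (∫ ω, (π (S ω))⁻¹ *
          ((τ k - (if Y1 ω ≤ q1 k then (1 : ℝ) else 0) - m1x k (S ω) (X ω)) *
            (τ l - (if Y1 ω ≤ q1 l then (1 : ℝ) else 0) - m1x l (S ω) (X ω))) /
          (fd1 (q1 k) * fd1 (q1 l)) ∂μ) +
        (∫ ω, (1 - π (S ω))⁻¹ *
          ((τ k - (if Y0 ω ≤ q0 k then (1 : ℝ) else 0) - m0x k (S ω) (X ω)) *
            (τ l - (if Y0 ω ≤ q0 l then (1 : ℝ) else 0) - m0x l (S ω) (X ω))) /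
          (fd0 (q0 k) * fd0 (q0 l)) ∂μ) +
        (∫ ω, (m1x k (S ω) (X ω) / fd1 (q1 k) - m0x k (S ω) (X ω) / fd0 (q0 k)) *
          (m1x l (S ω) (X ω) / fd1 (q1 l) - m0x l (S ω) (X ω) / fd0 (q0 l)) ∂μ)
    let u : Fin K → Ω → ℝ := fun k ω =>
      Real.sqrt ((1 - π (S ω)) / π (S ω)) *
          (((m1x k (S ω) (X ω) - (τ k - G1 k (S ω))) -
            (mbar1 k (S ω) (X ω) - mE1 k (S ω))) / fd1 (q1 k)) +
        Real.sqrt (π (S ω) / (1 - π (S ω))) *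
          (((m0x k (S ω) (X ω) - (τ k - G0 k (S ω))) -
            (mbar0 k (S ω) (X ω) - mE0 k (S ω))) / fd0 (q0 k))
    (∀ k l : Fin K, Sig k l - SigStar k l = ∫ ω, u k ω * u l ω ∂μ) ∧
      Matrix.PosSemidef (Matrix.of fun k l : Fin K => Sig k l - SigStar k l) ∧
      ((∀ k : Fin K,
          (∀ᵐ ω ∂μ, mbar1 k (S ω) (X ω) = m1x k (S ω) (X ω)) ∧
          (∀ᵐ ω ∂μ, mbar0 k (S ω) (X ω) = m0x k (S ω) (X ω))) →
        (Matrix.of fun k l : Fin K => Sig k l - SigStar k l) = 0) :=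
  adjusted_qte_covariance_decomposition_general μ Y1 Y0 S X hY1m hY0m hSm hXm π hπ hp K τ q1 q0 fd1
    fd0 F1 F0 hF1meas hF0meas hF1rng hF0rng hF1 hF0 mbar1 mbar0 hmbar1m hmbar0m hmom1 hmom0
end
end

section
/- Under the CAR setup and the bootstrap-weight assumption, for every s ∈ 𝒮: (D_nʷ(s) − D_n(s))/n(s) → 0 in probability, and max_{s∈𝒮} |D_nʷ(s)/nʷ(s)| → 0 in probability, where D_nʷ(s) = Σ_{i≤n} ξ_i (A_i − π(s)) 1{S_i = s}, D_n(s) = Σ_{i≤n} (A_i − π(s)) 1{S_i = s}, n(s) = Σ_{i≤n} 1{S_i = s}, and nʷ(s) = Σ_{i≤n} ξ_i 1{S_i = s} (ratios interpreted as 0 when the denominator is 0). -/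
open MeasureTheory ProbabilityTheory Filter
open scoped Classical

/-!
Write `η i = ξ i - 1`. The centred weights are orthonormal in `L²` and independent of the
strata and assignments, so for coefficients `c i` that are functions of that data,
`E (∑ η i c i)² = E ∑ (c i)²`. For both `(D_nʷ(s) - D_n(s)) / n(s)` and `(nʷ(s) - n(s)) / n(s)`
the coefficients are bounded multiples of `1{S i = s} / n(s)`, so the right-hand side is
`O(E[1 / n(s)])`, which tends to zero because `n(s) → ∞` almost surely by the strong law of
large numbers; Chebyshev's inequality turns this into convergence in probability.
Then `D_nʷ(s) / nʷ(s)` is a ratio of `D_n(s) / n(s) + o_P(1)` and `1 + o_P(1)`, and the maximum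
is over finitely many strata.
-/

open Finset

namespace BootstrapImbalance

variable {Ω : Type*} [MeasurableSpace Ω] {μ : Measure Ω}

lemma tendstoInMeasure_zero_iff_abs {ι : Type*} {l : Filter ι} {f : ι → Ω → ℝ} :
    TendstoInMeasure μ f l 0 ↔
      ∀ ε, 0 < ε → Tendsto (fun i => μ {ω | ε ≤ |f i ω|}) l (nhds 0) := by
  simp [tendstoInMeasure_iff_norm]

lemma tendstoInMeasure_zero_of_integral_sq [IsFiniteMeasure μ] {T : ℕ → Ω → ℝ}
    (hT : ∀ n, MemLp (T n) 2 μ) (hlim : Tendsto (fun n => ∫ ω, T n ω ^ 2 ∂μ) atTop (nhds 0)) :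
    TendstoInMeasure μ T atTop 0 := by
  rw [tendstoInMeasure_zero_iff_abs]
  intro ε hε
  have hmarkov : ∀ n, μ {ω | ε ≤ |T n ω|} ≤ ENNReal.ofReal ((∫ ω, T n ω ^ 2 ∂μ) / ε ^ 2) := by
    intro n
    have hsq : {ω | ε ≤ |T n ω|} = {ω | ε ^ 2 ≤ T n ω ^ 2} := by
      ext ω
      simp only [Set.mem_ofPred_eq, ← sq_abs (T n ω)]
      exact (pow_le_pow_iff_left₀ hε.le (abs_nonneg _) two_ne_zero).symm
    rw [hsq, ← ofReal_measureReal]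
    refine ENNReal.ofReal_le_ofReal ?_
    rw [le_div_iff₀ (by positivity), mul_comm]
    exact mul_meas_ge_le_integral_of_nonneg (ae_of_all _ fun ω => sq_nonneg _)
      (hT n).integrable_sq _
  refine tendsto_of_tendsto_of_tendsto_of_le_of_le tendsto_const_nhds ?_ (fun _ => zero_le)
    hmarkov
  simpa using ENNReal.tendsto_ofReal (hlim.div_const (ε ^ 2))

lemma integral_sq_sum_mul_eq [IsFiniteMeasure μ] {ι β : Type*} [MeasurableSpace β]
    {η : ι → Ω → ℝ} {Z : Ω → β} {c : ι → β → ℝ} {K : ℝ} (hη : ∀ i, MemLp (η i) 2 μ)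
    (hnorm : ∀ i, ∫ ω, η i ω ^ 2 ∂μ = 1) (horth : Pairwise fun i j => ∫ ω, η i ω * η j ω ∂μ = 0)
    (hind : IndepFun (fun ω i => η i ω) Z μ) (hZ : Measurable Z) (hc : ∀ i, Measurable (c i))
    (hcK : ∀ i ω, |c i (Z ω)| ≤ K) (t : Finset ι) :
    ∫ ω, (∑ i ∈ t, η i ω * c i (Z ω)) ^ 2 ∂μ = ∫ ω, ∑ i ∈ t, c i (Z ω) ^ 2 ∂μ := by
  have hcZ : ∀ i, AEStronglyMeasurable (fun ω => c i (Z ω)) μ :=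
    fun i => ((hc i).comp hZ).aestronglyMeasurable
  have hcc : ∀ i j ω, ‖c i (Z ω) * c j (Z ω)‖ ≤ K * K := fun i j ω => by
    rw [norm_mul, Real.norm_eq_abs, Real.norm_eq_abs]
    exact mul_le_mul (hcK i ω) (hcK j ω) (abs_nonneg _) ((abs_nonneg _).trans (hcK i ω))
  have hcint : ∀ i j, Integrable (fun ω => c i (Z ω) * c j (Z ω)) μ :=
    fun i j => .of_bound ((hcZ i).mul (hcZ j)) (K * K) (ae_of_all _ (hcc i j))
  have hterm : ∀ i j, Integrable (fun ω => η i ω * η j ω * (c i (Z ω) * c j (Z ω))) μ :=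
    fun i j => ((hη i).integrable_mul (hη j)).mul_bdd ((hcZ i).mul (hcZ j))
      (ae_of_all _ (hcc i j))
  have hfactor : ∀ i j, ∫ ω, η i ω * η j ω * (c i (Z ω) * c j (Z ω)) ∂μ
      = (∫ ω, η i ω * η j ω ∂μ) * ∫ ω, c i (Z ω) * c j (Z ω) ∂μ := by
    intro i j
    have hF : Measurable fun x : ι → ℝ => x i * x j :=
      (measurable_pi_apply i).mul (measurable_pi_apply j)
    exact (hind.comp hF ((hc i).mul (hc j))).integral_fun_mul_eq_mul_integral
      ((hη i).1.mul (hη j).1) ((hcZ i).mul (hcZ j))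
  calc ∫ ω, (∑ i ∈ t, η i ω * c i (Z ω)) ^ 2 ∂μ
      = ∫ ω, ∑ i ∈ t, ∑ j ∈ t, η i ω * η j ω * (c i (Z ω) * c j (Z ω)) ∂μ := by
        congr 1 with ω
        rw [sq, sum_mul_sum]
        exact sum_congr rfl fun i _ => sum_congr rfl fun j _ => by ring
    _ = ∑ i ∈ t, ∫ ω, c i (Z ω) * c i (Z ω) ∂μ := by
        rw [integral_finsetSum _ fun i _ => integrable_finsetSum _ fun j _ => hterm i j]
        refine sum_congr rfl fun i hi => ?_
        rw [integral_finsetSum _ fun j _ => hterm i j, sum_eq_single_of_mem i hi]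
        · simp_rw [hfactor, ← sq, hnorm, one_mul]
        · intro j _ hji
          rw [hfactor, horth hji.symm, zero_mul]
    _ = ∫ ω, ∑ i ∈ t, c i (Z ω) ^ 2 ∂μ := by
        simp only [sq]
        rw [integral_finsetSum _ fun i _ => hcint i i]

theorem tendstoInMeasure_sum_mul_of_tendsto_integral_sum_sq [IsFiniteMeasure μ] {β : Type*}
    [MeasurableSpace β] {η : ℕ → Ω → ℝ} {Z : Ω → β} {c : ℕ → ℕ → β → ℝ} {K : ℝ}
    (hη : ∀ i, MemLp (η i) 2 μ)
    (hnorm : ∀ i, ∫ ω, η i ω ^ 2 ∂μ = 1) (horth : Pairwise fun i j => ∫ ω, η i ω * η j ω ∂μ = 0)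
    (hind : IndepFun (fun ω i => η i ω) Z μ) (hZ : Measurable Z)
    (hc : ∀ n i, Measurable (c n i)) (hcK : ∀ n i ω, |c n i (Z ω)| ≤ K)
    (hlim : Tendsto (fun n => ∫ ω, ∑ i ∈ range n, c n i (Z ω) ^ 2 ∂μ) atTop (nhds 0)) :
    TendstoInMeasure μ (fun n ω => ∑ i ∈ range n, η i ω * c n i (Z ω)) atTop 0 := by
  refine tendstoInMeasure_zero_of_integral_sq (fun n => memLp_finsetSum _ fun i _ => ?_) ?_
  · exact (MemLp.of_bound (p := ⊤) ((hc n i).comp hZ).aestronglyMeasurable K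
      (ae_of_all _ fun ω => (Real.norm_eq_abs _).trans_le (hcK n i ω))).mul' (hη i)
  · simpa only [integral_sq_sum_mul_eq hη hnorm horth hind hZ (hc _) (hcK _)] using hlim

section Weights

variable {ξ : ℕ → Ω → ℝ}

lemma integral_sub_one_sq (hident : ∀ i, IdentDistrib (ξ i) (ξ 0) μ μ)
    (hvar : ∫ ω, (ξ 0 ω - 1) ^ 2 ∂μ = 1) (i : ℕ) : ∫ ω, (ξ i ω - 1) ^ 2 ∂μ = 1 := by
  simpa [Function.comp_def] using
    ((hident i).comp (by fun_prop : Measurable fun x : ℝ => (x - 1) ^ 2)).integral_eq.trans hvar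

lemma memLp_sub_one (hξ : ∀ i, Measurable (ξ i)) (hident : ∀ i, IdentDistrib (ξ i) (ξ 0) μ μ)
    (hvar : ∫ ω, (ξ 0 ω - 1) ^ 2 ∂μ = 1) (i : ℕ) : MemLp (fun ω => ξ i ω - 1) 2 μ := by
  refine (memLp_two_iff_integrable_sq ((hξ i).sub_const 1).aestronglyMeasurable).2 ?_
  by_contra h
  simpa [integral_undef h] using integral_sub_one_sq hident hvar i

lemma integral_sub_one_mul_sub_one [IsProbabilityMeasure μ] (hξ : ∀ i, Measurable (ξ i))
    (hindep : iIndepFun ξ μ) (hident : ∀ i, IdentDistrib (ξ i) (ξ 0) μ μ)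
    (hmean : ∫ ω, ξ 0 ω ∂μ = 1) (hvar : ∫ ω, (ξ 0 ω - 1) ^ 2 ∂μ = 1) :
    Pairwise fun i j => ∫ ω, (ξ i ω - 1) * (ξ j ω - 1) ∂μ = 0 := by
  have hcentered : ∀ i, ∫ ω, (ξ i ω - 1) ∂μ = 0 := fun i => by
    have hint : Integrable (ξ i) μ :=
      ((memLp_sub_one hξ hident hvar i).integrable one_le_two).add (integrable_const 1)
        |>.congr (ae_of_all _ fun ω => by simp)
    rw [integral_sub hint (integrable_const 1), (hident i).integral_eq, hmean]
    simp
  intro i j hij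
  have hfactor := ((hindep.indepFun hij).comp (measurable_id.sub_const 1)
    (measurable_id.sub_const 1)).integral_fun_mul_eq_mul_integral
    ((hξ i).sub_const 1).aestronglyMeasurable ((hξ j).sub_const 1).aestronglyMeasurable
  simpa [Function.comp_def, hcentered] using hfactor

end Weights

lemma tendsto_integral_inv_natCast_of_ae_tendsto_atTop [IsFiniteMeasure μ] {N : ℕ → Ω → ℕ}
    (hN : ∀ n, Measurable fun ω => (N n ω : ℝ))
    (h : ∀ᵐ ω ∂μ, Tendsto (fun n => N n ω) atTop atTop) :
    Tendsto (fun n => ∫ ω, ((N n ω : ℝ))⁻¹ ∂μ) atTop (nhds 0) := by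
  simpa using tendsto_integral_of_dominated_convergence (fun _ => 1)
    (fun n => (hN n).inv.aestronglyMeasurable) (integrable_const 1)
    (fun n => ae_of_all _ fun ω => by simp [Nat.cast_inv_le_one])
    (h.mono fun ω hω => (tendsto_natCast_atTop_iff.2 hω).inv_tendsto_atTop)

section Strata

variable {𝒮 : Type*}

noncomputable def stratumCount (s : 𝒮) (n : ℕ) (z : ℕ → 𝒮) : ℕ := #{i ∈ range n | z i = s}

lemma cast_stratumCount (s : 𝒮) (n : ℕ) (z : ℕ → 𝒮) :
    (stratumCount s n z : ℝ) = ∑ i ∈ range n, if z i = s then 1 else 0 := by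
  simp [stratumCount, sum_boole]

lemma measurable_cast_stratumCount [MeasurableSpace 𝒮] [MeasurableSingletonClass 𝒮]
    (s : 𝒮) (n : ℕ) : Measurable fun z : ℕ → 𝒮 => (stratumCount s n z : ℝ) := by
  have hφ : Measurable fun x : 𝒮 => if x = s then (1 : ℝ) else 0 :=
    Measurable.ite (measurableSet_singleton s) measurable_const measurable_const
  simp_rw [cast_stratumCount]
  exact Finset.measurable_sum _ fun i _ => hφ.comp (measurable_pi_apply i)

lemma ae_tendsto_stratumCount_atTop [IsFiniteMeasure μ] [MeasurableSpace 𝒮]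
    [MeasurableSingletonClass 𝒮] {S : ℕ → Ω → 𝒮} (hS : ∀ i, Measurable (S i))
    (hindep : iIndepFun S μ) (hident : ∀ i, IdentDistrib (S i) (S 0) μ μ) {s : 𝒮}
    (hp : 0 < μ {ω | S 0 ω = s}) :
    ∀ᵐ ω ∂μ, Tendsto (fun n => stratumCount s n fun i => S i ω) atTop atTop := by
  set φ : 𝒮 → ℝ := fun x => if x = s then 1 else 0
  have hφ : Measurable φ :=
    Measurable.ite (measurableSet_singleton s) measurable_const measurable_const
  have hslln := strong_law_ae_real (fun i => φ ∘ S i)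
    (Integrable.of_bound (hφ.comp (hS 0)).aestronglyMeasurable 1
      (ae_of_all _ fun ω => by by_cases h : S 0 ω = s <;> simp [φ, h]))
    (fun i j hij => (hindep.indepFun hij).comp hφ hφ) (fun i => (hident i).comp hφ)
  have hfreq : ∫ ω, φ (S 0 ω) ∂μ = μ.real {ω | S 0 ω = s} := by
    have hindicator : (fun ω => φ (S 0 ω)) = {ω | S 0 ω = s}.indicator 1 := by
      ext ω
      simp [φ, Set.indicator_apply]
    rw [hindicator]
    exact integral_indicator_one (hS 0 (measurableSet_singleton s))
  have hfreq_pos : 0 < μ.real {ω | S 0 ω = s} :=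
    ENNReal.toReal_pos hp.ne' (measure_ne_top μ _)
  filter_upwards [hslln] with ω hω
  rw [← tendsto_natCast_atTop_iff (R := ℝ)]
  rw [Function.comp_def, hfreq] at hω
  refine (Tendsto.atTop_mul_pos hfreq_pos tendsto_natCast_atTop_atTop hω).congr' ?_
  filter_upwards [eventually_ne_atTop 0] with n hn
  rw [mul_div_cancel₀ _ (Nat.cast_ne_zero.2 hn), cast_stratumCount]
  simp [φ]

lemma sum_sq_mul_ite_div_stratumCount_le {a : ℕ → ℝ} {K : ℝ} (haK : ∀ i, |a i| ≤ K)
    (s : 𝒮) (n : ℕ) (z : ℕ → 𝒮) :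
    ∑ i ∈ range n, (a i * (if z i = s then 1 else 0) / stratumCount s n z) ^ 2
      ≤ K ^ 2 * (stratumCount s n z : ℝ)⁻¹ := by
  set N : ℝ := (stratumCount s n z : ℝ) with hN_def
  calc ∑ i ∈ range n, (a i * (if z i = s then 1 else 0) / N) ^ 2
      ≤ ∑ i ∈ range n, K ^ 2 * (if z i = s then 1 else 0) * (N⁻¹) ^ 2 := by
        refine sum_le_sum fun i _ => ?_
        have hsq : a i ^ 2 ≤ K ^ 2 := sq_le_sq' (abs_le.1 (haK i)).1 (abs_le.1 (haK i)).2
        split_ifs <;> simp only [div_eq_mul_inv, mul_pow, mul_one, mul_zero, zero_mul,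
          zero_pow two_ne_zero, le_refl]
        exact mul_le_mul_of_nonneg_right hsq (sq_nonneg _)
    _ = K ^ 2 * (N * N⁻¹) * N⁻¹ := by
        rw [← sum_mul, ← mul_sum, ← cast_stratumCount, ← hN_def]
        ring
    _ ≤ K ^ 2 * N⁻¹ := by
        rcases eq_or_ne N 0 with hN | hN
        · simp [hN]
        · rw [mul_inv_cancel₀ hN, mul_one]

lemma tendsto_integral_inv_stratumCount [IsFiniteMeasure μ] [MeasurableSpace 𝒮]
    [MeasurableSingletonClass 𝒮] {S : ℕ → Ω → 𝒮} (hS : ∀ i, Measurable (S i))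
    (hindep : iIndepFun S μ) (hident : ∀ i, IdentDistrib (S i) (S 0) μ μ) {s : 𝒮}
    (hp : 0 < μ {ω | S 0 ω = s}) :
    Tendsto (fun n => ∫ ω, ((stratumCount s n fun i => S i ω : ℝ))⁻¹ ∂μ) atTop (nhds 0) :=
  tendsto_integral_inv_natCast_of_ae_tendsto_atTop
    (fun n => (measurable_cast_stratumCount s n).comp (measurable_pi_lambda _ hS))
    (ae_tendsto_stratumCount_atTop hS hindep hident hp)

lemma sum_mul_ite_eq_zero_of_sum_ite_eq_zero {s : 𝒮} {n : ℕ} {z : ℕ → 𝒮} (f : ℕ → ℝ)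
    (h : ∑ i ∈ range n, (if z i = s then (1 : ℝ) else 0) = 0) :
    ∑ i ∈ range n, f i * (if z i = s then (1 : ℝ) else 0) = 0 := by
  have hzero := (sum_eq_zero_iff_of_nonneg fun i _ => by split_ifs <;> norm_num).1 h
  exact sum_eq_zero fun i hi => by rw [hzero i hi, mul_zero]

end Strata

theorem tendstoInMeasure_sum_mul_ite_div_stratumCount [IsFiniteMeasure μ] {𝒮 γ : Type*}
    [MeasurableSpace 𝒮] [MeasurableSingletonClass 𝒮] [MeasurableSpace γ] {η : ℕ → Ω → ℝ}
    {Z : Ω → (ℕ → 𝒮) × γ} {a : ℕ → ℕ → (ℕ → 𝒮) × γ → ℝ} {K : ℝ} {s : 𝒮}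
    (hη : ∀ i, MemLp (η i) 2 μ) (hnorm : ∀ i, ∫ ω, η i ω ^ 2 ∂μ = 1)
    (horth : Pairwise fun i j => ∫ ω, η i ω * η j ω ∂μ = 0)
    (hind : IndepFun (fun ω i => η i ω) Z μ) (hZ : Measurable Z)
    (ha : ∀ n i, Measurable (a n i)) (haK : ∀ n i ω, |a n i (Z ω)| ≤ K)
    (hcount : Tendsto (fun n => ∫ ω, ((stratumCount s n (Z ω).1 : ℝ))⁻¹ ∂μ) atTop (nhds 0)) :
    TendstoInMeasure μ (fun n ω => (∑ i ∈ range n,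
      η i ω * a n i (Z ω) * (if (Z ω).1 i = s then 1 else 0)) / stratumCount s n (Z ω).1)
      atTop 0 := by
  set c : ℕ → ℕ → (ℕ → 𝒮) × γ → ℝ :=
    fun n i z => a n i z * (if z.1 i = s then 1 else 0) / stratumCount s n z.1
  have hN : ∀ n, Measurable fun z : (ℕ → 𝒮) × γ => (stratumCount s n z.1 : ℝ) :=
    fun n => (measurable_cast_stratumCount s n).comp measurable_fst
  have hc : ∀ n i, Measurable (c n i) := fun n i =>
    ((ha n i).mul (Measurable.ite (measurable_fst (measurable_pi_apply i
      (measurableSet_singleton s))) measurable_const measurable_const)).div (hN n)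
  have hcK : ∀ n i ω, |c n i (Z ω)| ≤ K := fun n i ω => by
    have hweight : |(if (Z ω).1 i = s then (1 : ℝ) else 0) / stratumCount s n (Z ω).1| ≤ 1 := by
      split_ifs <;> simp [Nat.cast_inv_le_one]
    calc |c n i (Z ω)|
        = |a n i (Z ω)| * |(if (Z ω).1 i = s then (1 : ℝ) else 0) / stratumCount s n (Z ω).1| := by
          simp only [c, mul_div_assoc, abs_mul]
      _ ≤ K := mul_le_of_le_one_right (abs_nonneg _) hweight |>.trans (haK n i ω)
  have hsum_sq : ∀ n ω, ∑ i ∈ range n, c n i (Z ω) ^ 2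
      ≤ K ^ 2 * (stratumCount s n (Z ω).1 : ℝ)⁻¹ := fun n ω =>
    sum_sq_mul_ite_div_stratumCount_le (fun i => haK n i ω) s n (Z ω).1
  have hlim : Tendsto (fun n => ∫ ω, ∑ i ∈ range n, c n i (Z ω) ^ 2 ∂μ) atTop (nhds 0) := by
    refine tendsto_of_tendsto_of_tendsto_of_le_of_le tendsto_const_nhds
      (by simpa using hcount.const_mul (K ^ 2)) (fun n => integral_nonneg fun ω => ?_)
      (fun n => ?_)
    · exact sum_nonneg fun i _ => sq_nonneg _
    · rw [← integral_const_mul]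
      refine integral_mono_of_nonneg (ae_of_all _ fun ω => sum_nonneg fun i _ => sq_nonneg _) ?_
        (ae_of_all _ (hsum_sq n))
      exact (Integrable.of_bound ((hN n).inv.comp hZ).aestronglyMeasurable 1
        (ae_of_all _ fun ω => by simp [Nat.cast_inv_le_one])).const_mul _
  refine (tendstoInMeasure_sum_mul_of_tendsto_integral_sum_sq hη hnorm horth hind hZ hc hcK
    hlim).congr_left fun n => ae_of_all _ fun ω => ?_
  simp only [c, sum_div, mul_div_assoc, mul_assoc]

theorem tendstoInMeasure_bootstrap_sum_mul_ite_div_stratumCount [IsProbabilityMeasure μ]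
    {𝒮 γ : Type*} [MeasurableSpace 𝒮] [MeasurableSingletonClass 𝒮] [MeasurableSpace γ]
    {ξ : ℕ → Ω → ℝ} {Z : Ω → (ℕ → 𝒮) × γ} {a : ℕ → ℕ → (ℕ → 𝒮) × γ → ℝ} {K : ℝ} {s : 𝒮}
    (hξ : ∀ i, Measurable (ξ i)) (hindep : iIndepFun ξ μ)
    (hident : ∀ i, IdentDistrib (ξ i) (ξ 0) μ μ) (hmean : ∫ ω, ξ 0 ω ∂μ = 1)
    (hvar : ∫ ω, (ξ 0 ω - 1) ^ 2 ∂μ = 1) (hind : IndepFun (fun ω i => ξ i ω) Z μ)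
    (hZ : Measurable Z) (ha : ∀ n i, Measurable (a n i)) (haK : ∀ n i ω, |a n i (Z ω)| ≤ K)
    (hcount : Tendsto (fun n => ∫ ω, ((stratumCount s n (Z ω).1 : ℝ))⁻¹ ∂μ) atTop (nhds 0)) :
    TendstoInMeasure μ (fun n ω => (∑ i ∈ range n,
      (ξ i ω - 1) * a n i (Z ω) * (if (Z ω).1 i = s then 1 else 0)) / stratumCount s n (Z ω).1)
      atTop 0 :=
  tendstoInMeasure_sum_mul_ite_div_stratumCount (memLp_sub_one hξ hident hvar)
    (integral_sub_one_sq hident hvar) (integral_sub_one_mul_sub_one hξ hindep hident hmean hvar)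
    (hind.comp (measurable_pi_lambda _ fun i => (measurable_pi_apply i).sub_const 1)
      measurable_id) hZ ha haK hcount

lemma abs_div_lt_four_mul {D Dw N nw δ : ℝ} (hN : N = 0 → Dw = 0) (hD : |D / N| < δ)
    (hDw : |(Dw - D) / N| < δ) (hnw : |(nw - N) / N| < 1 / 2) : |Dw / nw| < 4 * δ := by
  rcases eq_or_ne N 0 with h0 | h0
  · simp only [hN h0, zero_div, abs_zero]
    linarith [abs_nonneg (D / N)]
  have hDwN : |Dw / N| < 2 * δ := by
    calc |Dw / N| = |D / N + (Dw - D) / N| := by rw [← add_div, add_sub_cancel]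
      _ ≤ |D / N| + |(Dw - D) / N| := abs_add_le _ _
      _ < 2 * δ := by linarith
  have hnwN : 1 / 2 < |nw / N| := by
    have h : nw / N = 1 + (nw - N) / N := by field_simp; ring
    rw [h]
    linarith [neg_abs_le ((nw - N) / N), le_abs_self (1 + (nw - N) / N)]
  have hquot : Dw / nw = (Dw / N) / (nw / N) := by
    rw [div_div_div_cancel_right₀ h0]
  rw [hquot, abs_div, div_lt_iff₀ (by linarith)]
  nlinarith [abs_nonneg (Dw / N)]

lemma tendstoInMeasure_div_of_relative_errors {D Dw N nw : ℕ → Ω → ℝ}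
    (hN : ∀ n ω, N n ω = 0 → Dw n ω = 0)
    (hD : TendstoInMeasure μ (fun n ω => D n ω / N n ω) atTop 0)
    (hDw : TendstoInMeasure μ (fun n ω => (Dw n ω - D n ω) / N n ω) atTop 0)
    (hnw : TendstoInMeasure μ (fun n ω => (nw n ω - N n ω) / N n ω) atTop 0) :
    TendstoInMeasure μ (fun n ω => Dw n ω / nw n ω) atTop 0 := by
  rw [tendstoInMeasure_zero_iff_abs] at hD hDw hnw ⊢
  intro ε hε
  have hsub : ∀ n, {ω | ε ≤ |Dw n ω / nw n ω|} ⊆ {ω | ε / 4 ≤ |D n ω / N n ω|}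
      ∪ {ω | ε / 4 ≤ |(Dw n ω - D n ω) / N n ω|} ∪ {ω | 1 / 2 ≤ |(nw n ω - N n ω) / N n ω|} := by
    intro n ω hω
    by_contra hnot
    simp only [Set.mem_union, Set.mem_ofPred_eq, not_or, not_le] at hω hnot
    linarith [abs_div_lt_four_mul (hN n ω) hnot.1.1 hnot.1.2 hnot.2]
  have hbound := ((hD (ε / 4) (by positivity)).add (hDw (ε / 4) (by positivity))).add
    (hnw (1 / 2) one_half_pos)
  rw [add_zero, add_zero] at hbound
  refine tendsto_of_tendsto_of_tendsto_of_le_of_le tendsto_const_nhds hbound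
    (fun _ => zero_le) fun n => (measure_mono (hsub n)).trans ?_
  exact (measure_union_le _ _).trans (add_le_add_left (measure_union_le _ _) _)

lemma tendsto_measure_ge_sup'_abs {ι : Type*} [Fintype ι] [Nonempty ι] {f : ι → ℕ → Ω → ℝ}
    (hf : ∀ s, TendstoInMeasure μ (f s) atTop 0) {ε : ℝ} (hε : 0 < ε) :
    Tendsto (fun n => μ {ω | ε ≤ univ.sup' univ_nonempty fun s => |f s n ω|}) atTop
      (nhds 0) := by
  have hsub : ∀ n, {ω | ε ≤ univ.sup' univ_nonempty fun s => |f s n ω|}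
      ⊆ ⋃ s ∈ (univ : Finset ι), {ω | ε ≤ |f s n ω|} := fun n ω hω => by
    simpa [le_sup'_iff] using hω
  refine tendsto_of_tendsto_of_tendsto_of_le_of_le tendsto_const_nhds
    (by simpa using tendsto_finsetSum univ fun s _ => tendstoInMeasure_zero_iff_abs.1 (hf s) ε hε)
    (fun _ => zero_le) fun n => (measure_mono (hsub n)).trans (measure_biUnion_finset_le _ _)

end BootstrapImbalance

open BootstrapImbalance in
theorem bootstrap_imbalance_vanishes_general
    {Ω : Type*} [MeasurableSpace Ω] (μ : Measure Ω) [IsProbabilityMeasure μ]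
    {𝒮 : Type*} [Fintype 𝒮] [Nonempty 𝒮] [MeasurableSpace 𝒮] [MeasurableSingletonClass 𝒮]
    {𝒳 : Type*} [MeasurableSpace 𝒳]
    (Y1 Y0 : ℕ → Ω → ℝ) (S : ℕ → Ω → 𝒮) (X : ℕ → Ω → 𝒳) (A : ℕ → ℕ → Ω → ℝ)
    (π : 𝒮 → ℝ)
    (hSm : ∀ i, Measurable (S i))
    (hAm : ∀ n i, Measurable (A n i))
    (hA01 : ∀ n i ω, A n i ω = 0 ∨ A n i ω = 1)
    (hindep : iIndepFun
      (fun i ω => (Y1 i ω, Y0 i ω, S i ω, X i ω)) μ)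
    (hident : ∀ i, IdentDistrib (fun ω => (Y1 i ω, Y0 i ω, S i ω, X i ω))
      (fun ω => (Y1 0 ω, Y0 0 ω, S 0 ω, X 0 ω)) μ μ)
    (hp : ∀ s, 0 < μ {ω | S 0 ω = s})
    (hD : ∀ s : 𝒮, ∀ ε : ℝ, 0 < ε → Tendsto (fun n =>
      μ {ω | ε ≤
        |(∑ i ∈ Finset.range n, (A n i ω - π s) * (if S i ω = s then (1 : ℝ) else 0)) /
          (∑ i ∈ Finset.range n, (if S i ω = s then (1 : ℝ) else 0))|}) atTop (nhds 0))
    -- bootstrap weights: i.i.d., nonnegative, mean one, variance one,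
    -- sub-exponential upper tail, independent of the data and treatment indicators
    (ξ : ℕ → Ω → ℝ) (hξm : ∀ i, Measurable (ξ i))
    (hξindep : iIndepFun ξ μ)
    (hξident : ∀ i, IdentDistrib (ξ i) (ξ 0) μ μ)
    (hξmean : ∫ ω, ξ 0 ω ∂μ = 1)
    (hξvar : ∫ ω, (ξ 0 ω - 1) ^ 2 ∂μ = 1)
    (hξdata : IndepFun (fun ω => (fun i : ℕ => ξ i ω))
      (fun ω => ((fun i : ℕ => (Y1 i ω, Y0 i ω, S i ω, X i ω)),
        (fun p : ℕ × ℕ => A p.1 p.2 ω))) μ) :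
    (∀ s : 𝒮, ∀ ε : ℝ, 0 < ε → Tendsto (fun n =>
      μ {ω | ε ≤
        |((∑ i ∈ Finset.range n, ξ i ω * (A n i ω - π s) * (if S i ω = s then (1 : ℝ) else 0)) -
            (∑ i ∈ Finset.range n, (A n i ω - π s) * (if S i ω = s then (1 : ℝ) else 0))) /
          (∑ i ∈ Finset.range n, (if S i ω = s then (1 : ℝ) else 0))|}) atTop (nhds 0)) ∧
    (∀ ε : ℝ, 0 < ε → Tendsto (fun n =>
      μ {ω | ε ≤
        Finset.univ.sup' Finset.univ_nonempty (fun s : 𝒮 =>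
          |(∑ i ∈ Finset.range n, ξ i ω * (A n i ω - π s) * (if S i ω = s then (1 : ℝ) else 0)) /
            (∑ i ∈ Finset.range n, ξ i ω * (if S i ω = s then (1 : ℝ) else 0))|)})
      atTop (nhds 0)) := by
  set Z : Ω → (ℕ → 𝒮) × (ℕ × ℕ → ℝ) := fun ω => (fun i => S i ω, fun p => A p.1 p.2 ω)
  have hZ : Measurable Z :=
    (measurable_pi_lambda _ hSm).prodMk (measurable_pi_lambda _ fun p => hAm p.1 p.2)
  have hstrata : Measurable fun q : ℝ × ℝ × 𝒮 × 𝒳 => q.2.2.1 := measurable_snd.snd.fst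
  have hind : IndepFun (fun ω i => ξ i ω) Z μ :=
    hξdata.comp measurable_id ((measurable_pi_lambda _ fun i =>
      hstrata.comp ((measurable_pi_apply i).comp measurable_fst)).prodMk measurable_snd)
  have hstat := fun s a K ha haK =>
    tendstoInMeasure_bootstrap_sum_mul_ite_div_stratumCount (s := s) (a := a) (K := K)
      hξm hξindep hξident hξmean hξvar hind hZ ha haK
      (tendsto_integral_inv_stratumCount hSm (hindep.comp _ fun _ => hstrata)
        (fun i => (hident i).comp hstrata) (hp s))
  have hdiff : ∀ s, TendstoInMeasure μ (fun n ω =>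
      ((∑ i ∈ range n, ξ i ω * (A n i ω - π s) * (if S i ω = s then (1 : ℝ) else 0)) -
        (∑ i ∈ range n, (A n i ω - π s) * (if S i ω = s then (1 : ℝ) else 0))) /
      (∑ i ∈ range n, (if S i ω = s then (1 : ℝ) else 0))) atTop 0 := fun s =>
    (hstat s (fun n i z => z.2 (n, i) - π s) (1 + |π s|)
      (fun n i => ((measurable_pi_apply (n, i)).comp measurable_snd).sub_const _)
      (fun n i ω => (abs_sub _ _).trans (by rcases hA01 n i ω with h | h <;> simp [Z, h]))
      ).congr_left fun n => ae_of_all _ fun ω => by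
        dsimp only [Z]
        rw [cast_stratumCount, ← sum_sub_distrib]
        exact congrArg (· / _) (sum_congr rfl fun i _ => by ring)
  have hweights : ∀ s, TendstoInMeasure μ (fun n ω =>
      ((∑ i ∈ range n, ξ i ω * (if S i ω = s then (1 : ℝ) else 0)) -
        (∑ i ∈ range n, (if S i ω = s then (1 : ℝ) else 0))) /
      (∑ i ∈ range n, (if S i ω = s then (1 : ℝ) else 0))) atTop 0 := fun s =>
    (hstat s (fun _ _ _ => 1) 1 (fun _ _ => measurable_const) (fun _ _ _ => by simp)
      ).congr_left fun n => ae_of_all _ fun ω => by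
        dsimp only [Z]
        rw [cast_stratumCount, ← sum_sub_distrib]
        exact congrArg (· / _) (sum_congr rfl fun i _ => by ring)
  -- an empty stratum has `D_nʷ(s) = 0`, so the junk value `x / 0 = 0` is harmless there
  have hempty : ∀ s n ω, ∑ i ∈ range n, (if S i ω = s then (1 : ℝ) else 0) = 0 →
      ∑ i ∈ range n, ξ i ω * (A n i ω - π s) * (if S i ω = s then (1 : ℝ) else 0) = 0 :=
    fun _ _ _ => sum_mul_ite_eq_zero_of_sum_ite_eq_zero _
  exact ⟨fun s => tendstoInMeasure_zero_iff_abs.1 (hdiff s), fun ε hε =>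
    tendsto_measure_ge_sup'_abs (fun s => tendstoInMeasure_div_of_relative_errors (hempty s)
      (tendstoInMeasure_zero_iff_abs.2 (hD s)) (hdiff s) (hweights s)) hε⟩

/-- Under covariate-adaptive randomization and the bootstrap-weight assumption,
`(D_nʷ(s) − D_n(s))/n(s) → 0` in probability for every stratum `s`, and
`max_{s} |D_nʷ(s)/nʷ(s)| → 0` in probability. -/
theorem bootstrap_imbalance_vanishes
    {Ω : Type*} [MeasurableSpace Ω] (μ : Measure Ω) [IsProbabilityMeasure μ]
    {𝒮 : Type*} [Fintype 𝒮] [Nonempty 𝒮] [MeasurableSpace 𝒮] [MeasurableSingletonClass 𝒮]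
    {𝒳 : Type*} [MeasurableSpace 𝒳]
    (Y1 Y0 : ℕ → Ω → ℝ) (S : ℕ → Ω → 𝒮) (X : ℕ → Ω → 𝒳) (A : ℕ → ℕ → Ω → ℝ)
    (π : 𝒮 → ℝ) (c : ℝ) (hc : 0 < c ∧ c < 1 / 2)
    (hπ : ∀ s, c < π s ∧ π s < 1 - c)
    (hY1m : ∀ i, Measurable (Y1 i)) (hY0m : ∀ i, Measurable (Y0 i))
    (hSm : ∀ i, Measurable (S i)) (hXm : ∀ i, Measurable (X i))
    (hAm : ∀ n i, Measurable (A n i))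
    (hA01 : ∀ n i ω, A n i ω = 0 ∨ A n i ω = 1)
    (hindep : iIndepFun
      (fun i ω => (Y1 i ω, Y0 i ω, S i ω, X i ω)) μ)
    (hident : ∀ i, IdentDistrib (fun ω => (Y1 i ω, Y0 i ω, S i ω, X i ω))
      (fun ω => (Y1 0 ω, Y0 0 ω, S 0 ω, X 0 ω)) μ μ)
    (hp : ∀ s, 0 < μ {ω | S 0 ω = s})
    (hD : ∀ s : 𝒮, ∀ ε : ℝ, 0 < ε → Tendsto (fun n =>
      μ {ω | ε ≤
        |(∑ i ∈ Finset.range n, (A n i ω - π s) * (if S i ω = s then (1 : ℝ) else 0)) /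
          (∑ i ∈ Finset.range n, (if S i ω = s then (1 : ℝ) else 0))|}) atTop (nhds 0))
    -- bootstrap weights: i.i.d., nonnegative, mean one, variance one,
    -- sub-exponential upper tail, independent of the data and treatment indicators
    (ξ : ℕ → Ω → ℝ) (hξm : ∀ i, Measurable (ξ i))
    (hξnonneg : ∀ i ω, 0 ≤ ξ i ω)
    (hξindep : iIndepFun ξ μ)
    (hξident : ∀ i, IdentDistrib (ξ i) (ξ 0) μ μ)
    (hξmean : ∫ ω, ξ 0 ω ∂μ = 1)
    (hξvar : ∫ ω, (ξ 0 ω - 1) ^ 2 ∂μ = 1)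
    (hξtail : ∃ a b : ℝ, 0 < a ∧ 0 < b ∧
      ∀ t : ℝ, 0 ≤ t → (μ {ω | t ≤ ξ 0 ω}).toReal ≤ a * Real.exp (-b * t))
    (hξdata : IndepFun (fun ω => (fun i : ℕ => ξ i ω))
      (fun ω => ((fun i : ℕ => (Y1 i ω, Y0 i ω, S i ω, X i ω)),
        (fun p : ℕ × ℕ => A p.1 p.2 ω))) μ) :
    (∀ s : 𝒮, ∀ ε : ℝ, 0 < ε → Tendsto (fun n =>
      μ {ω | ε ≤
        |((∑ i ∈ Finset.range n, ξ i ω * (A n i ω - π s) * (if S i ω = s then (1 : ℝ) else 0)) -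
            (∑ i ∈ Finset.range n, (A n i ω - π s) * (if S i ω = s then (1 : ℝ) else 0))) /
          (∑ i ∈ Finset.range n, (if S i ω = s then (1 : ℝ) else 0))|}) atTop (nhds 0)) ∧
    (∀ ε : ℝ, 0 < ε → Tendsto (fun n =>
      μ {ω | ε ≤
        Finset.univ.sup' Finset.univ_nonempty (fun s : 𝒮 =>
          |(∑ i ∈ Finset.range n, ξ i ω * (A n i ω - π s) * (if S i ω = s then (1 : ℝ) else 0)) /
            (∑ i ∈ Finset.range n, ξ i ω * (if S i ω = s then (1 : ℝ) else 0))|)})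
      atTop (nhds 0)) :=
  bootstrap_imbalance_vanishes_general μ Y1 Y0 S X A π hSm hAm hA01 hindep hident hp hD ξ hξm
    hξindep hξident hξmean hξvar hξdata
end

section
/- Let Y₁, …, Y_n ∈ ℝ, let w₁, …, w_n ≥ 0, let B ∈ ℝ, let τ ∈ (0,1), and define f(q) = Σ_{i=1}^n w_i ρ_τ(Y_i − q) + B q, where ρ_τ(u) = u(τ − 1{u ≤ 0}). Suppose an index i₁ ∈ {1, …, n} satisfies w_{i₁} > 0 and the subgradient inequalities τ Σ_{i=1}^n w_i − B ≥ Σ_{i=1}^n w_i 1{Y_i < Y_{i₁}} and Σ_{i=1}^n w_i 1{Y_i < Y_{i₁}} ≥ τ Σ_{i=1}^n w_i − w_{i₁} − B. Then Y_{i₁} is a global minimizer of f on ℝ, i.e. f(Y_{i₁}) ≤ f(q) for all q ∈ ℝ. -/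
open scoped Classical

/-- Pointwise subgradient inequality for the check function
`ρ_τ(u) = u (τ − 1{u ≤ 0})`: for any admissible subgradient value `τ − c`
at the point `v`, we have `ρ(v) + (τ − c)(u − v) ≤ ρ(u)`. -/
lemma check_subgrad_pointwise (τ u v c : ℝ)
    (h1 : v < 0 → c = 1) (h0 : 0 < v → c = 0) (hr : v = 0 → c = 0 ∨ c = 1) :
    v * (τ - if v ≤ 0 then (1 : ℝ) else 0) + (τ - c) * (u - v) ≤
      u * (τ - if u ≤ 0 then (1 : ℝ) else 0) := by
  rcases lt_trichotomy v 0 with hv | hv | hv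
  · have hc := h1 hv
    subst hc
    split_ifs with h h' h' <;> nlinarith
  · rcases hr hv with hc | hc <;> subst hc <;>
      split_ifs with h h' h' <;> nlinarith
  · have hc := h0 hv
    subst hc
    split_ifs with h h' h' <;> nlinarith

/-- Summed subgradient inequality. -/
lemma check_subgrad_sum (n : ℕ) (Y : Fin n → ℝ) (w : Fin n → ℝ) (τ m q : ℝ)
    (hw : ∀ i, 0 ≤ w i) (c : Fin n → ℝ)
    (hc1 : ∀ i, Y i - m < 0 → c i = 1) (hc0 : ∀ i, 0 < Y i - m → c i = 0)
    (hcr : ∀ i, Y i - m = 0 → c i = 0 ∨ c i = 1) :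
    (∑ i, w i * ((Y i - m) * (τ - if Y i - m ≤ 0 then (1 : ℝ) else 0)))
      + (τ * (∑ i, w i) - ∑ i, w i * c i) * (m - q)
      ≤ ∑ i, w i * ((Y i - q) * (τ - if Y i - q ≤ 0 then (1 : ℝ) else 0)) := by
  have hsum : (τ * (∑ i, w i) - ∑ i, w i * c i) * (m - q)
      = ∑ i, w i * ((τ - c i) * (m - q)) := by
    rw [sub_mul, Finset.mul_sum, Finset.sum_mul, Finset.sum_mul, ← Finset.sum_sub_distrib]
    exact Finset.sum_congr rfl fun i _ => by ring
  rw [hsum, ← Finset.sum_add_distrib]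
  apply Finset.sum_le_sum
  intro i _
  have key := check_subgrad_pointwise τ (Y i - q) (Y i - m) (c i)
    (hc1 i) (hc0 i) (hcr i)
  have h2 : (Y i - q) - (Y i - m) = m - q := by ring
  rw [h2] at key
  have := mul_le_mul_of_nonneg_left key (hw i)
  nlinarith [this]

/-- If an observation `Y i₁` (with positive weight) satisfies the subgradient
inequalities for the weighted check-function objective
`f(q) = Σᵢ wᵢ ρ_τ(Yᵢ − q) + B q`, then it is a global minimizer of `f`. -/
theorem check_subgradient_global_min
    (n : ℕ) (Y : Fin n → ℝ) (w : Fin n → ℝ) (B τ : ℝ)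
    (hw : ∀ i, 0 ≤ w i) (hτ : τ ∈ Set.Ioo (0 : ℝ) 1)
    (i₁ : Fin n) (hw1 : 0 < w i₁)
    (hub : ∑ i, w i * (if Y i < Y i₁ then (1 : ℝ) else 0) ≤ τ * (∑ i, w i) - B)
    (hlb : τ * (∑ i, w i) - w i₁ - B ≤ ∑ i, w i * (if Y i < Y i₁ then (1 : ℝ) else 0)) :
    ∀ q : ℝ,
      (∑ i, w i * ((Y i - Y i₁) * (τ - if Y i - Y i₁ ≤ 0 then (1 : ℝ) else 0))) + B * Y i₁ ≤
        (∑ i, w i * ((Y i - q) * (τ - if Y i - q ≤ 0 then (1 : ℝ) else 0))) + B * q := by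
  intro q
  set m := Y i₁ with hm
  set S := ∑ i, w i * (if Y i < Y i₁ then (1 : ℝ) else 0) with hS
  rcases le_total q m with hq | hq
  · -- use subgradient with c i = 1{Y i < m}
    have step := check_subgrad_sum n Y w τ m q hw
      (fun i => if Y i < Y i₁ then (1 : ℝ) else 0)
      (fun i hi => by simp only [if_pos (show Y i < Y i₁ by rw [← hm]; linarith)])
      (fun i hi => by simp only [if_neg (show ¬ Y i < Y i₁ by rw [← hm]; push_neg; linarith)])
      (fun i hi => Or.inl (by simp only [if_neg (show ¬ Y i < Y i₁ by rw [← hm]; push_neg; linarith)]))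
    have hB : B * (m - q) ≤ (τ * (∑ i, w i) - S) * (m - q) := by
      apply mul_le_mul_of_nonneg_right _ (by linarith)
      linarith
    rw [← hS] at step
    linarith
  · -- use subgradient with c i = 1{Y i ≤ m}
    set T := ∑ i, w i * (if Y i ≤ Y i₁ then (1 : ℝ) else 0) with hT
    have step := check_subgrad_sum n Y w τ m q hw
      (fun i => if Y i ≤ Y i₁ then (1 : ℝ) else 0)
      (fun i hi => by simp only [if_pos (show Y i ≤ Y i₁ by rw [← hm]; linarith)])
      (fun i hi => by simp only [if_neg (show ¬ Y i ≤ Y i₁ by rw [← hm]; push_neg; linarith)])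
      (fun i hi => Or.inr (by simp only [if_pos (show Y i ≤ Y i₁ by rw [← hm]; linarith)]))
    rw [← hT] at step
    have hST : S + w i₁ ≤ T := by
      have : w i₁ ≤ ∑ i, (w i * (if Y i ≤ Y i₁ then (1 : ℝ) else 0)
          - w i * (if Y i < Y i₁ then (1 : ℝ) else 0)) := by
        have h1 : ∀ i ∈ Finset.univ, (0 : ℝ) ≤ w i * (if Y i ≤ Y i₁ then (1 : ℝ) else 0)
            - w i * (if Y i < Y i₁ then (1 : ℝ) else 0) := by
          intro i _
          split_ifs with h h' h' <;>
            first
              | nlinarith [hw i]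
              | exact absurd (le_of_lt h') h
        have h2 : w i₁ * (if Y i₁ ≤ Y i₁ then (1 : ℝ) else 0)
            - w i₁ * (if Y i₁ < Y i₁ then (1 : ℝ) else 0) = w i₁ := by
          simp
        calc w i₁ = _ := h2.symm
          _ ≤ _ := Finset.single_le_sum h1 (Finset.mem_univ i₁)
      rw [Finset.sum_sub_distrib] at this
      rw [hS, hT]; linarith
    have hB : B * (m - q) ≤ (τ * (∑ i, w i) - T) * (m - q) := by
      apply mul_le_mul_of_nonpos_right _ (by linarith)
      linarith
    linarith
end

section
/- Knight's identity: for every u, v ∈ ℝ and τ ∈ (0,1), with ρ_τ(u) = u(τ − 1{u ≤ 0}): ρ_τ(u − v) − ρ_τ(u) = −v(τ − 1{u ≤ 0}) + ∫₀^v (1{u ≤ s} − 1{u ≤ 0}) ds, where ∫₀^v denotes the signed (interval) Lebesgue integral. -/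
open scoped Classical
open MeasureTheory

lemma knight_aux_mono (u : ℝ) : Monotone (fun s : ℝ => if u ≤ s then (1:ℝ) else 0) := by
  intro a b hab
  dsimp only
  split_ifs with h1 h2 <;> norm_num
  exact h2 (h1.trans hab)

lemma knight_aux_one (u a b : ℝ) (ha : u ≤ a) (hb : u ≤ b) :
    ∫ s in a..b, (if u ≤ s then (1:ℝ) else 0) = b - a := by
  have : ∫ s in a..b, (if u ≤ s then (1:ℝ) else 0) = ∫ s in a..b, (1:ℝ) := by
    apply intervalIntegral.integral_congr
    intro s hs
    rcases Set.mem_uIcc.mp hs with ⟨h1, _⟩ | ⟨h1, _⟩ <;>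
      simp [show u ≤ s by linarith]
  rw [this]; simp

lemma knight_aux_zero (u a b : ℝ) (ha : a ≤ u) (hb : b ≤ u) :
    ∫ s in a..b, (if u ≤ s then (1:ℝ) else 0) = 0 := by
  have hu : ∀ᵐ s : ℝ, s ≠ u := by
    rw [MeasureTheory.ae_iff]
    simpa [Ne, Set.setOf_eq_eq_singleton] using (Real.volume_singleton (a := u))
  have : ∫ s in a..b, (if u ≤ s then (1:ℝ) else 0) = ∫ s in a..b, (0:ℝ) := by
    apply intervalIntegral.integral_congr_ae
    filter_upwards [hu] with s hs hmem
    rcases Set.mem_uIoc.mp hmem with ⟨_, h2⟩ | ⟨_, h2⟩ <;>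
      simp [show ¬ u ≤ s from fun hc => hs (le_antisymm (by linarith) hc)]
  rw [this]; simp

lemma knight_aux_int (u v : ℝ) :
    ∫ s in (0:ℝ)..v, (if u ≤ s then (1:ℝ) else 0) = max (v - u) 0 - max (-u) 0 := by
  have hmono := knight_aux_mono u
  rcases le_or_gt u 0 with h | h
  · rcases le_or_gt u v with hv | hv
    · rw [knight_aux_one u 0 v h hv]
      rw [max_eq_left (by linarith), max_eq_left (by linarith)]; ring
    · have hsplit : (∫ s in (0:ℝ)..u, (if u ≤ s then (1:ℝ) else 0)) +
          ∫ s in u..v, (if u ≤ s then (1:ℝ) else 0)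
          = ∫ s in (0:ℝ)..v, (if u ≤ s then (1:ℝ) else 0) :=
        intervalIntegral.integral_add_adjacent_intervals
          (hmono.intervalIntegrable) (hmono.intervalIntegrable)
      rw [← hsplit, knight_aux_one u 0 u h le_rfl, knight_aux_zero u u v le_rfl (by linarith)]
      rw [max_eq_right (by linarith), max_eq_left (by linarith)]; ring
  · rcases le_or_gt v u with hv | hv
    · rw [knight_aux_zero u 0 v (by linarith) hv]
      rw [max_eq_right (by linarith), max_eq_right (by linarith)]; ring
    · have hsplit : (∫ s in (0:ℝ)..u, (if u ≤ s then (1:ℝ) else 0)) +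
          ∫ s in u..v, (if u ≤ s then (1:ℝ) else 0)
          = ∫ s in (0:ℝ)..v, (if u ≤ s then (1:ℝ) else 0) :=
        intervalIntegral.integral_add_adjacent_intervals
          (hmono.intervalIntegrable) (hmono.intervalIntegrable)
      rw [← hsplit, knight_aux_zero u 0 u (by linarith) le_rfl,
        knight_aux_one u u v le_rfl (by linarith)]
      rw [max_eq_left (by linarith), max_eq_right (by linarith)]; ring

/-- **Knight's identity** for the quantile check function
`ρ_τ(u) = u (τ − 1{u ≤ 0})`: for every `u, v ∈ ℝ` and `τ ∈ (0,1)`,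
`ρ_τ(u − v) − ρ_τ(u) = −v (τ − 1{u ≤ 0}) + ∫₀^v (1{u ≤ s} − 1{u ≤ 0}) ds`,
where the integral is the signed (interval) Lebesgue integral. -/
theorem knight_identity (u v τ : ℝ) (hτ : τ ∈ Set.Ioo (0 : ℝ) 1) :
    (u - v) * (τ - if u - v ≤ 0 then 1 else 0) - u * (τ - if u ≤ 0 then 1 else 0) =
      -v * (τ - if u ≤ 0 then 1 else 0) +
        ∫ s in (0 : ℝ)..v,
          ((if u ≤ s then (1 : ℝ) else 0) - (if u ≤ 0 then (1 : ℝ) else 0)) := by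
  have hmono := knight_aux_mono u
  rw [intervalIntegral.integral_sub hmono.intervalIntegrable intervalIntegrable_const,
    knight_aux_int u v, intervalIntegral.integral_const]
  rcases le_or_gt u 0 with h | h <;> rcases le_or_gt (u - v) 0 with h2 | h2
  · simp only [if_pos h, if_pos h2]
    rw [max_eq_left (by linarith), max_eq_left (by linarith)]; simp; ring
  · simp only [if_pos h, if_neg (not_le.mpr h2)]
    rw [max_eq_right (by linarith), max_eq_left (by linarith)]; simp; ring
  · simp only [if_neg (not_le.mpr h), if_pos h2]
    rw [max_eq_left (by linarith), max_eq_right (by linarith)]; simp; ring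
  · simp only [if_neg (not_le.mpr h), if_neg (not_le.mpr h2)]
    rw [max_eq_right (by linarith), max_eq_right (by linarith)]; simp; ring
end

section
/- Let λ(z) = e^z/(1 + e^z) denote the logistic CDF. For all a, b ∈ ℝ: log(1 + e^{a+b}) − log(1 + e^{a}) − b λ(a) ≥ λ(a)(1 − λ(a)) (e^{−|b|} + |b| − 1) ≥ λ(a)(1 − λ(a)) (b²/2 − |b|³/6). In particular, since e^{−x} + x − 1 ≥ x²/2 − x³/6 for all x ≥ 0, the Bregman remainder of the logistic log-partition function is bounded below by λ(a)(1 − λ(a)) times these quantities. -/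
/-!
The remainder `R(b) = F(a + b) - F(a) - b F'(a)` of `F(z) = log (1 + e^z)` has `R(0) = R'(0) = 0`
and `R''(b) = λ'(a + b)`, while `φ(b) = e^{-b} + b - 1` has `φ(0) = φ'(0) = 0` and `φ''(b) = e^{-b}`.
For `b ≥ 0` the density `λ' = λ(1 - λ)` satisfies `λ'(a + b) ≥ e^{-b} λ'(a)`, because
`1 + e^{a+b} ≤ e^b (1 + e^a)`; comparing second derivatives gives `R(b) ≥ λ'(a) φ(b)`.
The case `b < 0` follows from the symmetry `R_a(b) = R_{-a}(-b)`, which comes from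
`F(-z) = F(z) - z` and `λ(-z) = 1 - λ(z)`. The cubic bound is again a second-derivative
comparison, `e^{-x} - 1 + x ≥ 0`.
-/

/-- The logistic CDF `λ(z) = e^z / (1 + e^z)`. -/
noncomputable def logisticCDF (z : ℝ) : ℝ := Real.exp z / (1 + Real.exp z)

open Real

lemma nonneg_of_hasDerivAt_of_deriv2_nonneg {f f' f'' : ℝ → ℝ}
    (hf : ∀ x, HasDerivAt f (f' x) x) (hf' : ∀ x, HasDerivAt f' (f'' x) x)
    (h₀ : f 0 = 0) (h₀' : f' 0 = 0) (hf'' : ∀ x, 0 ≤ x → 0 ≤ f'' x) {x : ℝ} (hx : 0 ≤ x) :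
    0 ≤ f x := by
  have apply_zero_le {g g' : ℝ → ℝ} (hg : ∀ x, HasDerivAt g (g' x) x)
      (hg' : ∀ x, 0 ≤ x → 0 ≤ g' x) {x : ℝ} (hx : 0 ≤ x) : g 0 ≤ g x :=
    monotoneOn_of_hasDerivWithinAt_nonneg (convex_Ici 0)
      (fun y _ ↦ (hg y).continuousAt.continuousWithinAt) (fun y _ ↦ (hg y).hasDerivWithinAt)
      (fun y hy ↦ hg' y (by rw [interior_Ici] at hy; exact hy.le))
      Set.self_mem_Ici hx hx
  exact h₀ ▸ apply_zero_le hf (fun y hy ↦ h₀' ▸ apply_zero_le hf' hf'' hy) hx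

lemma hasDerivAt_exp_neg (x : ℝ) : HasDerivAt (fun t ↦ exp (-t)) (-exp (-x)) x := by
  simpa using (hasDerivAt_neg x).exp

lemma cubic_le_exp_neg_add_sub_one {x : ℝ} (hx : 0 ≤ x) :
    x ^ 2 / 2 - x ^ 3 / 6 ≤ exp (-x) + x - 1 := by
  have key := nonneg_of_hasDerivAt_of_deriv2_nonneg
    (f := fun t ↦ exp (-t) + t - 1 - (t ^ 2 / 2 - t ^ 3 / 6))
    (f' := fun t ↦ -exp (-t) + 1 - (t - t ^ 2 / 2)) (f'' := fun t ↦ exp (-t) - 1 + t)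
    (fun y ↦ by
      refine ((((hasDerivAt_exp_neg y).add (hasDerivAt_id y)).sub_const 1).sub
        (((hasDerivAt_pow 2 y).div_const 2).sub ((hasDerivAt_pow 3 y).div_const 6))).congr_deriv ?_
      push_cast; ring)
    (fun y ↦ by
      refine (((hasDerivAt_exp_neg y).neg.add_const 1).sub
        ((hasDerivAt_id y).sub ((hasDerivAt_pow 2 y).div_const 2))).congr_deriv ?_
      push_cast; ring)
    (by simp) (by simp) (fun y _ ↦ by linarith [add_one_le_exp (-y)]) hx
  linarith

noncomputable def logisticPDF (z : ℝ) : ℝ := logisticCDF z * (1 - logisticCDF z)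

noncomputable def logisticBregman (a b : ℝ) : ℝ :=
  log (1 + exp (a + b)) - log (1 + exp a) - b * logisticCDF a

lemma logisticCDF_neg (z : ℝ) : logisticCDF (-z) = 1 - logisticCDF z := by
  unfold logisticCDF
  rw [exp_neg]
  field_simp
  ring

lemma logisticPDF_neg (z : ℝ) : logisticPDF (-z) = logisticPDF z := by
  simp only [logisticPDF, logisticCDF_neg]
  ring

lemma logisticPDF_eq (z : ℝ) : logisticPDF z = exp z / (1 + exp z) ^ 2 := by
  unfold logisticPDF logisticCDF
  field_simp
  ring

lemma logisticPDF_pos (z : ℝ) : 0 < logisticPDF z := by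
  rw [logisticPDF_eq]
  positivity

lemma hasDerivAt_log_one_add_exp (z : ℝ) :
    HasDerivAt (fun z ↦ log (1 + exp z)) (logisticCDF z) z :=
  ((hasDerivAt_exp z).const_add 1).log (by positivity)

lemma hasDerivAt_logisticCDF (z : ℝ) : HasDerivAt logisticCDF (logisticPDF z) z := by
  refine ((hasDerivAt_exp z).div ((hasDerivAt_exp z).const_add 1) (by positivity)).congr_deriv ?_
  rw [logisticPDF_eq]
  ring

lemma log_one_add_exp_neg (z : ℝ) : log (1 + exp (-z)) = log (1 + exp z) - z := by
  have : 1 + exp (-z) = (1 + exp z) * exp (-z) := by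
    rw [add_mul, one_mul, ← exp_add, add_neg_cancel, exp_zero, add_comm]
  rw [this, log_mul (by positivity) (by positivity), log_exp]
  ring

lemma logisticBregman_neg (a b : ℝ) : logisticBregman (-a) (-b) = logisticBregman a b := by
  simp only [logisticBregman, ← neg_add, log_one_add_exp_neg, logisticCDF_neg]
  ring

lemma exp_neg_mul_logisticPDF_le (a : ℝ) {t : ℝ} (ht : 0 ≤ t) :
    exp (-t) * logisticPDF a ≤ logisticPDF (a + t) := by
  have hs : 1 ≤ exp t := one_le_exp ht
  have hden : 1 + exp a * exp t ≤ exp t * (1 + exp a) := by nlinarith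
  rw [logisticPDF_eq, logisticPDF_eq, exp_add, exp_neg, ← div_eq_inv_mul, div_div,
    div_le_div_iff₀ (by positivity) (by positivity)]
  calc exp a * (1 + exp a * exp t) ^ 2
      ≤ exp a * (exp t * (1 + exp a)) ^ 2 := by gcongr
    _ = exp a * exp t * ((1 + exp a) ^ 2 * exp t) := by ring

lemma logisticPDF_mul_le_logisticBregman_of_nonneg (a : ℝ) {b : ℝ} (hb : 0 ≤ b) :
    logisticPDF a * (exp (-b) + b - 1) ≤ logisticBregman a b := by
  have key := nonneg_of_hasDerivAt_of_deriv2_nonneg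
    (f := fun t ↦ logisticBregman a t - logisticPDF a * (exp (-t) + t - 1))
    (f' := fun t ↦ logisticCDF (a + t) - logisticCDF a - logisticPDF a * (1 - exp (-t)))
    (f'' := fun t ↦ logisticPDF (a + t) - logisticPDF a * exp (-t))
    (fun y ↦ by
      refine (((((hasDerivAt_log_one_add_exp (a + y)).comp_const_add a y).sub_const _).sub
        ((hasDerivAt_id y).mul_const _)).sub
        ((((hasDerivAt_exp_neg y).add (hasDerivAt_id y)).sub_const 1).const_mul _)).congr_deriv ?_
      ring)
    (fun y ↦ by
      refine ((((hasDerivAt_logisticCDF (a + y)).comp_const_add a y).sub_const _).sub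
        (((hasDerivAt_exp_neg y).const_sub 1).const_mul _)).congr_deriv ?_
      ring)
    (by simp [logisticBregman]) (by simp)
    (fun y hy ↦ by linarith [exp_neg_mul_logisticPDF_le a hy]) hb
  linarith

lemma logisticPDF_mul_le_logisticBregman (a b : ℝ) :
    logisticPDF a * (exp (-|b|) + |b| - 1) ≤ logisticBregman a b := by
  rcases le_or_gt 0 b with hb | hb
  · rw [abs_of_nonneg hb]
    exact logisticPDF_mul_le_logisticBregman_of_nonneg a hb
  · rw [abs_of_neg hb, ← logisticPDF_neg, ← logisticBregman_neg]
    exact logisticPDF_mul_le_logisticBregman_of_nonneg (-a) (neg_nonneg.mpr hb.le)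

/-- Lower bounds for the Bregman remainder of the logistic log-partition function:
for all `a, b ∈ ℝ`,
`log(1+e^{a+b}) − log(1+e^a) − b λ(a) ≥ λ(a)(1−λ(a))(e^{−|b|} + |b| − 1)
  ≥ λ(a)(1−λ(a))(b²/2 − |b|³/6)`,
and in particular `e^{−x} + x − 1 ≥ x²/2 − x³/6` for all `x ≥ 0`. -/
theorem logistic_bregman_lower_bound :
    (∀ a b : ℝ,
      Real.log (1 + Real.exp (a + b)) - Real.log (1 + Real.exp a) - b * logisticCDF a ≥
        logisticCDF a * (1 - logisticCDF a) * (Real.exp (-|b|) + |b| - 1) ∧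
      logisticCDF a * (1 - logisticCDF a) * (Real.exp (-|b|) + |b| - 1) ≥
        logisticCDF a * (1 - logisticCDF a) * (b ^ 2 / 2 - |b| ^ 3 / 6)) ∧
    (∀ x : ℝ, 0 ≤ x → Real.exp (-x) + x - 1 ≥ x ^ 2 / 2 - x ^ 3 / 6) := by
  refine ⟨fun a b ↦ ⟨logisticPDF_mul_le_logisticBregman a b, ?_⟩,
    fun x hx ↦ cubic_le_exp_neg_add_sub_one hx⟩
  rw [← sq_abs b]
  exact mul_le_mul_of_nonneg_left (cubic_le_exp_neg_add_sub_one (abs_nonneg b))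
    (logisticPDF_pos a).le
end
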